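/- arXiv:2007.11420 — 6 statements merged into one kernel-verified Lean document; each statement's English description precedes it below -/
import Mathlib

section
/- Let q : ℝⁿ → ℝ ∪ {+∞} be proper convex lsc. For every (x, x*) in the graph of ∂q there exists a symmetric positive semidefinite n×n matrix G with ‖G‖ ≤ 1 such that for all v* ∈ ℝⁿ, the pair ((I−G)v*, Gv*) belongs to the graph of the limiting coderivative D*(∂q)(x, x*); i.e., Gv* ∈ D*(∂q)(x, x*)((I−G)v*). -/
open RealInnerProductSpace Set Filter Topology

variable {H : Type*} [NormedAddCommGroup H] [InnerProductSpace ℝ H]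

/-- The convex (Moreau–Rockafellar) subdifferential of an `EReal`-valued function. -/
noncomputable def subdiff (q : H → EReal) (x : H) : Set H :=
  {v | ∀ y, q x + ((⟪v, y - x⟫ : ℝ) : EReal) ≤ q y}

/-- `q` is proper: finite somewhere, never `-∞`. -/
def ProperFun (q : H → EReal) : Prop := (∃ x, q x ≠ ⊤) ∧ ∀ x, q x ≠ ⊥

/-- `q` is convex: its epigraph is a convex set. -/
def ConvexFun (q : H → EReal) : Prop := Convex ℝ {p : H × ℝ | q p.1 ≤ (p.2 : EReal)}

/-- The objective of the proximal subproblem `u ↦ (γ/2)‖u‖² + ⟨f(x),u⟩ + q(x+u)`. -/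
noncomputable def proxObj (f : H → H) (q : H → EReal) (γ : ℝ) (x u : H) : EReal :=
  ((γ / 2 * ‖u‖ ^ 2 + ⟪f x, u⟫ : ℝ) : EReal) + q (x + u)

/-- The regular (Fréchet) normal cone to the graph of `Φ` at `(x, y)`. -/
def gphFrechetNormal (Φ : H → Set H) (x y : H) : Set (H × H) :=
  {p | ∀ ε > (0 : ℝ), ∃ δ > (0 : ℝ), ∀ x' y', y' ∈ Φ x' → ‖x' - x‖ < δ → ‖y' - y‖ < δ →
    ⟪p.1, x' - x⟫ + ⟪p.2, y' - y⟫ ≤ ε * (‖x' - x‖ + ‖y' - y‖)}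

/-- The limiting (Mordukhovich) normal cone to the graph of `Φ` at `(x, y)`. -/
def gphLimitingNormal (Φ : H → Set H) (x y : H) : Set (H × H) :=
  {p | ∃ (xs ys : ℕ → H) (ps : ℕ → H × H),
    (∀ k, ys k ∈ Φ (xs k) ∧ ps k ∈ gphFrechetNormal Φ (xs k) (ys k)) ∧
    Tendsto xs atTop (nhds x) ∧ Tendsto ys atTop (nhds y) ∧ Tendsto ps atTop (nhds p)}

/-- The limiting coderivative `D*Φ(x, y)`:
`u* ∈ D*Φ(x,y)(v*)` iff `(u*, -v*)` is a limiting normal to `gph Φ` at `(x, y)`. -/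
def coderiv (Φ : H → Set H) (x y vstar : H) : Set H :=
  {ustar | (ustar, -vstar) ∈ gphLimitingNormal Φ x y}

/-!
By Minty's theorem every `z` splits uniquely as `z = P z + (z - P z)` with `z - P z ∈ ∂q (P z)`,
`P` being the proximal map of `q`; monotonicity of `∂q` makes `z ↦ z - P z` firmly nonexpansive,
and it is the gradient of the Moreau envelope `e₁q`. Wherever it is differentiable its Jacobian `A`
is therefore a Hessian (symmetric), positive semidefinite and of norm at most `1`, and
differentiating the parametrization `z ↦ (P z, z - P z)` of `gph ∂q` shows that
`(A v, -(v - A v))` is a regular normal to `gph ∂q`. By Rademacher's theorem such points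
accumulate at `x + x*`; a limit `G` of their Jacobians, i.e. an element of the B-subdifferential of
`∇e₁q` at `x + x*`, keeps all these properties, and the regular normals converge to limiting normals
at `(P (x + x*), x*) = (x, x*)`.
-/

open Metric Asymptotics
open scoped NNReal

theorem norm_le_of_norm_sq_le_inner {a b : H} (h : ‖a‖ ^ 2 ≤ ⟪a, b⟫) : ‖a‖ ≤ ‖b‖ := by
  by_contra! hlt
  have hb := real_inner_le_norm a b
  nlinarith [norm_nonneg b]

theorem lipschitzWith_one_of_norm_sq_le_inner {f : H → H}
    (h : ∀ z z', ‖f z - f z'‖ ^ 2 ≤ ⟪f z - f z', z - z'⟫) : LipschitzWith 1 f :=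
  LipschitzWith.of_dist_le_mul fun z z' => by
    simpa [dist_eq_norm] using norm_le_of_norm_sq_le_inner (h z z')

theorem hasFDerivAt_of_sub_inner_le {f : H → ℝ} {g : H → H} {K : ℝ≥0} {C : ℝ}
    (hg : LipschitzWith K g) (h : ∀ z z', f z' - f z - ⟪g z, z' - z⟫ ≤ C * ‖z' - z‖ ^ 2)
    (z : H) : HasFDerivAt f (innerSL ℝ (g z)) z := by
  rw [hasFDerivAt_iff_isLittleO_nhds_zero]
  refine IsBigO.trans_isLittleO ?_ (isLittleO_norm_pow_id one_lt_two)
  refine IsBigO.of_bound (K + |C|) (Eventually.of_forall fun d => ?_)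
  have hup := h z (z + d)
  have hlow := h (z + d) z
  have hgd : -(K * ‖d‖ ^ 2) ≤ ⟪g (z + d) - g z, d⟫ := by
    have h₁ := abs_real_inner_le_norm (g (z + d) - g z) d
    have h₂ : ‖g (z + d) - g z‖ ≤ K * ‖d‖ := by simpa using hg.norm_sub_le (z + d) z
    nlinarith [(abs_le.1 h₁).1, norm_nonneg d]
  simp only [add_sub_cancel_left, sub_add_cancel_left, norm_neg, inner_neg_right,
    inner_sub_left] at hup hlow hgd
  rw [innerSL_apply_apply, Real.norm_eq_abs, norm_pow, norm_norm, abs_le]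
  constructor <;> nlinarith [le_abs_self C, neg_abs_le C, sq_nonneg ‖d‖]

theorem isSymmetric_of_hasFDerivAt_gradient {f : H → ℝ} {g : H → H} {A : H →L[ℝ] H} {z : H}
    (hf : ∀ w, HasFDerivAt f (innerSL ℝ (g w)) w) (hg : HasFDerivAt g A z) :
    A.IsSymmetric := fun a b => by
  have : ⟪A a, b⟫ = ⟪A b, a⟫ :=
    second_derivative_symmetric hf ((innerSL ℝ).hasFDerivAt.comp z hg) a b
  rw [ContinuousLinearMap.coe_coe, this, real_inner_comm]

theorem HasFDerivAt.inner_apply_self_nonneg {g : H → H} {A : H →L[ℝ] H} {z : H}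
    (hA : HasFDerivAt g A z) (hg : ∀ w w', 0 ≤ ⟪g w - g w', w - w'⟫) (v : H) :
    0 ≤ ⟪A v, v⟫ := by
  refine ge_of_tendsto ((hA.lim_real v).inner tendsto_const_nhds) ?_
  filter_upwards [eventually_gt_atTop 0] with c hc
  have := hg (z + c⁻¹ • v) z
  rw [add_sub_cancel_left, real_inner_smul_right] at this
  rw [real_inner_smul_left]
  exact mul_nonneg hc.le (nonneg_of_mul_nonneg_right this (inv_pos.2 hc))

theorem ContinuousLinearMap.isClosed_setOf_isPositive :
    IsClosed {T : H →L[ℝ] H | T.IsPositive} := by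
  simp only [isPositive_iff, LinearMap.IsSymmetric, coe_coe, ofPred_and, ofPred_forall]
  exact (isClosed_iInter fun a => isClosed_iInter fun b =>
      isClosed_eq (by fun_prop) (by fun_prop)).inter
    (isClosed_iInter fun a => isClosed_le continuous_const (by fun_prop))

section BSubdiff

variable {E F : Type*} [NormedAddCommGroup E] [NormedSpace ℝ E]
  [NormedAddCommGroup F] [NormedSpace ℝ F]

/-- The B-subdifferential `∂_B f x`. -/
def bSubdiff (f : E → F) (x : E) : Set (E →L[ℝ] F) :=
  {L | ∃ xs : ℕ → E, (∀ k, DifferentiableAt ℝ f (xs k)) ∧ Tendsto xs atTop (𝓝 x) ∧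
    Tendsto (fun k => fderiv ℝ f (xs k)) atTop (𝓝 L)}

theorem bSubdiff_subset {f : E → F} {x : E} {K : Set (E →L[ℝ] F)} (hK : IsClosed K)
    (h : ∀ z, DifferentiableAt ℝ f z → fderiv ℝ f z ∈ K) : bSubdiff f x ⊆ K := by
  rintro L ⟨xs, hxs, -, hL⟩
  exact hK.mem_of_tendsto hL (Eventually.of_forall fun k => h _ (hxs k))

theorem LipschitzWith.norm_le_of_mem_bSubdiff {C : ℝ≥0} {f : E → F} (hf : LipschitzWith C f)
    {x : E} {L : E →L[ℝ] F} (hL : L ∈ bSubdiff f x) : ‖L‖ ≤ C :=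
  mem_closedBall_zero_iff.1 <| bSubdiff_subset isClosed_closedBall
    (fun _ _ => mem_closedBall_zero_iff.2 (norm_fderiv_le_of_lipschitz ℝ hf)) hL

variable [FiniteDimensional ℝ E] [FiniteDimensional ℝ F] {C : ℝ≥0} {f : E → F}

theorem LipschitzWith.dense_differentiableAt (hf : LipschitzWith C f) :
    Dense {x | DifferentiableAt ℝ f x} :=
  let _ : MeasurableSpace E := borel E
  have _ : BorelSpace E := ⟨rfl⟩
  MeasureTheory.Measure.dense_of_ae (hf.ae_differentiableAt (μ := (Module.finBasis ℝ E).addHaar))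

theorem LipschitzWith.bSubdiff_nonempty (hf : LipschitzWith C f) (x : E) :
    (bSubdiff f x).Nonempty := by
  obtain ⟨xs, hxs, hlim⟩ := mem_closure_iff_seq_limit.1 (hf.dense_differentiableAt x)
  obtain ⟨L, -, φ, hφ, hL⟩ := (isCompact_closedBall (0 : E →L[ℝ] F) C).tendsto_subseq
    fun k => mem_closedBall_zero_iff.2 (norm_fderiv_le_of_lipschitz ℝ hf (x₀ := xs k))
  exact ⟨L, xs ∘ φ, fun k => hxs (φ k), hlim.comp hφ.tendsto_atTop, hL⟩

end BSubdiff

def MonotoneOperator (T : H → Set H) : Prop :=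
  ∀ ⦃x y x' y' : H⦄, y ∈ T x → y' ∈ T x' → 0 ≤ ⟪y - y', x - x'⟫

namespace MonotoneOperator

variable {T : H → Set H} {P : H → H}

theorem resolvent_add_eq (hT : MonotoneOperator T) (hP : ∀ z, z - P z ∈ T (P z)) {x y : H}
    (h : y ∈ T x) : P (x + y) = x := by
  have hmono := hT h (hP (x + y))
  have e : y - (x + y - P (x + y)) = -(x - P (x + y)) := by abel
  rw [e, inner_neg_left, real_inner_self_eq_norm_sq, neg_nonneg] at hmono
  exact (sub_eq_zero.1 (norm_eq_zero.1 (pow_eq_zero_iff two_ne_zero |>.1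
    (le_antisymm hmono (sq_nonneg _))))).symm

theorem norm_sq_le_inner_sub_resolvent (hT : MonotoneOperator T)
    (hP : ∀ z, z - P z ∈ T (P z)) (z z' : H) :
    ‖(z - P z) - (z' - P z')‖ ^ 2 ≤ ⟪(z - P z) - (z' - P z'), z - z'⟫ := by
  have hmono := hT (hP z) (hP z')
  have e : z - z' = ((z - P z) - (z' - P z')) + (P z - P z') := by abel
  rw [e, inner_add_right, real_inner_self_eq_norm_sq]
  linarith

theorem lipschitzWith_sub_resolvent (hT : MonotoneOperator T) (hP : ∀ z, z - P z ∈ T (P z)) :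
    LipschitzWith 1 fun z => z - P z :=
  lipschitzWith_one_of_norm_sq_le_inner (hT.norm_sq_le_inner_sub_resolvent hP)

theorem inner_sub_resolvent_nonneg (hT : MonotoneOperator T) (hP : ∀ z, z - P z ∈ T (P z))
    (z z' : H) : 0 ≤ ⟪(z - P z) - (z' - P z'), z - z'⟫ :=
  (sq_nonneg _).trans (hT.norm_sq_le_inner_sub_resolvent hP z z')

theorem mem_gphFrechetNormal (hT : MonotoneOperator T) (hP : ∀ z, z - P z ∈ T (P z))
    {A : H →L[ℝ] H} {z₀ : H} (hA : HasFDerivAt (fun z => z - P z) A z₀)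
    (hsymm : A.IsSymmetric) (v : H) :
    (A v, -(v - A v)) ∈ gphFrechetNormal T (P z₀) (z₀ - P z₀) := by
  intro ε hε
  obtain ⟨δ, hδ, hsmall⟩ :=
    Metric.eventually_nhds_iff.1 (((innerSL ℝ v).hasFDerivAt.comp z₀ hA).isLittleO.def hε)
  refine ⟨δ / 2, by positivity, fun x' y' hy' hx'δ hy'δ => ?_⟩
  set a := x' - P z₀
  set b := y' - (z₀ - P z₀)
  have hz' : x' + y' - z₀ = a + b := by simp only [a, b]; abel
  have hdist : dist (x' + y') z₀ < δ := by
    rw [dist_eq_norm, hz']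
    linarith [norm_add_le a b]
  have hrem := hsmall hdist
  simp only [Function.comp_apply, innerSL_apply_apply, ContinuousLinearMap.comp_apply, hz',
    hT.resolvent_add_eq hP hy', add_sub_cancel_left] at hrem
  have key : ⟪A v, a⟫ + ⟪-(v - A v), b⟫ = -(⟪v, y'⟫ - ⟪v, z₀ - P z₀⟫ - ⟪v, A (a + b)⟫) := by
    have hsymm' : ∀ x y, ⟪A x, y⟫ = ⟪x, A y⟫ := hsymm
    have hy' : y' = b + (z₀ - P z₀) := by simp only [b, sub_add_cancel]
    rw [hy', map_add, inner_add_right, inner_add_right, ← hsymm' v a, ← hsymm' v b,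
      inner_neg_left, inner_sub_left]
    ring
  show ⟪A v, a⟫ + ⟪-(v - A v), b⟫ ≤ ε * (‖a‖ + ‖b‖)
  rw [key]
  calc _ ≤ ‖⟪v, y'⟫ - ⟪v, z₀ - P z₀⟫ - ⟪v, A (a + b)⟫‖ := neg_le_abs _
    _ ≤ ε * ‖a + b‖ := hrem
    _ ≤ ε * (‖a‖ + ‖b‖) := by gcongr; exact norm_add_le a b

theorem mem_gphLimitingNormal_of_mem_bSubdiff (hT : MonotoneOperator T)
    (hP : ∀ z, z - P z ∈ T (P z))
    (hsymm : ∀ z, DifferentiableAt ℝ (fun z => z - P z) z →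
      (fderiv ℝ (fun z => z - P z) z).IsSymmetric)
    {G : H →L[ℝ] H} {z : H} (hG : G ∈ bSubdiff (fun z => z - P z) z) (v : H) :
    (G v, -(v - G v)) ∈ gphLimitingNormal T (P z) (z - P z) := by
  obtain ⟨zs, hdiff, hzs, hG⟩ := hG
  have hQ := (hT.lipschitzWith_sub_resolvent hP).continuous
  have hPcont : Continuous P := (continuous_id.sub hQ).congr fun z => sub_sub_cancel z (P z)
  have happly : Tendsto (fun k => fderiv ℝ (fun z => z - P z) (zs k) v) atTop (𝓝 (G v)) :=
    ((ContinuousLinearMap.apply ℝ H v).continuous.tendsto G).comp hG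
  exact ⟨fun k => P (zs k), fun k => zs k - P (zs k), _,
    fun k => ⟨hP (zs k), hT.mem_gphFrechetNormal hP (hdiff k).hasFDerivAt (hsymm _ (hdiff k)) v⟩,
    (hPcont.tendsto z).comp hzs, (hQ.tendsto z).comp hzs,
    happly.prodMk_nhds (tendsto_const_nhds.sub happly).neg⟩

end MonotoneOperator

theorem ConvexFun.le_add_smul_sub {q : H → EReal} (hconv : ConvexFun q) {u y : H} {a b t : ℝ}
    (hu : q u ≤ a) (hy : q y ≤ b) (ht : t ∈ Icc (0 : ℝ) 1) :
    q (u + t • (y - u)) ≤ ((a + t * (b - a) : ℝ) : EReal) := by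
  simpa using hconv.add_smul_sub_mem (x := (u, a)) (y := (y, b)) hu hy ht

namespace ProperFun

variable {q : H → EReal}

theorem ne_top_of_mem_subdiff (hq : ProperFun q) {u v : H} (h : v ∈ subdiff q u) :
    q u ≠ ⊤ := by
  obtain ⟨y, hy⟩ := hq.1
  intro htop
  have := h y
  rw [htop, EReal.top_add_of_ne_bot (EReal.coe_ne_bot _), top_le_iff] at this
  exact hy this

theorem coe_toReal_of_mem_subdiff (hq : ProperFun q) {u v : H} (h : v ∈ subdiff q u) :
    ((q u).toReal : EReal) = q u :=
  EReal.coe_toReal (hq.ne_top_of_mem_subdiff h) (hq.2 u)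

theorem toReal_add_inner_le (hq : ProperFun q) {u v y : H} (h : v ∈ subdiff q u)
    (hy : q y ≠ ⊤) : (q u).toReal + ⟪v, y - u⟫ ≤ (q y).toReal := by
  have := h y
  rw [← hq.coe_toReal_of_mem_subdiff h, ← EReal.coe_toReal hy (hq.2 y)] at this
  exact_mod_cast this

theorem monotoneOperator_subdiff (hq : ProperFun q) : MonotoneOperator (subdiff q) := by
  intro x y x' y' h h'
  have h₁ := hq.toReal_add_inner_le h (hq.ne_top_of_mem_subdiff h')
  have h₂ := hq.toReal_add_inner_le h' (hq.ne_top_of_mem_subdiff h)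
  have e : ⟪y - y', x - x'⟫ = -⟪y, x' - x⟫ - ⟪y', x - x'⟫ := by
    simp only [inner_sub_left, inner_sub_right]; ring
  linarith

theorem exists_forall_add_sq_le [ProperSpace H] (hq : ProperFun q)
    (hlsc : LowerSemicontinuous q) {x xstar : H} (hx : xstar ∈ subdiff q x) (z : H) :
    ∃ u, ∀ y, q u + ((‖z - u‖ ^ 2 / 2 : ℝ) : EReal) ≤ q y + ((‖z - y‖ ^ 2 / 2 : ℝ) : EReal) := by
  set φ : H → EReal := fun y => q y + ((‖z - y‖ ^ 2 / 2 : ℝ) : EReal)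
  have hφ : LowerSemicontinuous φ := hlsc.add'
    (continuous_coe_real_ereal.comp (by fun_prop)).lowerSemicontinuous
    fun _ => EReal.continuousAt_add (Or.inr (EReal.coe_ne_bot _)) (Or.inr (EReal.coe_ne_top _))
  set S := {y | φ y ≤ φ x}
  -- `S` is bounded because `q` lies above the affine minorant given by `xstar`.
  have hS : S ⊆ closedBall x ‖(2 : ℝ) • (z - x - xstar)‖ := fun y hy => by
    have hle : q x + ((⟪xstar, y - x⟫ + ‖z - y‖ ^ 2 / 2 : ℝ) : EReal) ≤
        q x + ((‖z - x‖ ^ 2 / 2 : ℝ) : EReal) := by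
      rw [EReal.coe_add, ← add_assoc]
      exact (add_le_add (hx y) le_rfl).trans hy
    rw [← hq.coe_toReal_of_mem_subdiff hx, ← EReal.coe_add, ← EReal.coe_add,
      EReal.coe_le_coe_iff] at hle
    have e : z - y = (z - x) - (y - x) := by abel
    rw [e, norm_sub_sq_real] at hle
    rw [mem_closedBall, dist_eq_norm]
    refine norm_le_of_norm_sq_le_inner ?_
    simp only [inner_smul_right, inner_sub_right, real_inner_comm (y - x)] at hle ⊢
    linarith
  have hxS : x ∈ S := le_refl (φ x)
  obtain ⟨u, -, hu⟩ := (hφ.lowerSemicontinuousOn S).exists_isMinOn ⟨x, hxS⟩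
    ((isCompact_closedBall _ _).of_isClosed_subset (hφ.isClosed_preimage _) hS)
  refine ⟨u, fun y => ?_⟩
  by_cases hy : y ∈ S
  · exact hu hy
  · exact (hu hxS).trans (not_le.1 hy).le

theorem sub_mem_subdiff_of_forall_add_sq_le (hq : ProperFun q) (hconv : ConvexFun q) {z u : H}
    (hu : ∀ y, q u + ((‖z - u‖ ^ 2 / 2 : ℝ) : EReal) ≤ q y + ((‖z - y‖ ^ 2 / 2 : ℝ) : EReal)) :
    z - u ∈ subdiff q u := by
  obtain ⟨c, hc⟩ : ∃ c : ℝ, q u = c := by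
    refine ⟨(q u).toReal, (EReal.coe_toReal (fun htop => ?_) (hq.2 u)).symm⟩
    obtain ⟨y, hy⟩ := hq.1
    have := hu y
    rw [htop, EReal.top_add_of_ne_bot (EReal.coe_ne_bot _), top_le_iff] at this
    exact EReal.add_ne_top hy (EReal.coe_ne_top _) this
  intro y
  rw [hc, ← EReal.coe_add]
  induction hy : q y using EReal.rec with
  | bot => exact absurd hy (hq.2 y)
  | top => exact le_top
  | coe r =>
    rw [EReal.coe_le_coe_iff]
    -- Comparing `u` with `u + t • (y - u)` and letting `t → 0⁺`.
    have key : ∀ t ∈ Ioc (0 : ℝ) 1, c + ⟪z - u, y - u⟫ ≤ r + t * (‖y - u‖ ^ 2 / 2) := by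
      rintro t ⟨ht₀, ht₁⟩
      have hmin := (hu (u + t • (y - u))).trans
        (add_le_add (hconv.le_add_smul_sub hc.le hy.le ⟨ht₀.le, ht₁⟩) le_rfl)
      rw [hc, ← EReal.coe_add, ← EReal.coe_add, EReal.coe_le_coe_iff] at hmin
      have e : z - (u + t • (y - u)) = (z - u) - t • (y - u) := by abel
      rw [e, norm_sub_sq_real (z - u), inner_smul_right, norm_smul,
        Real.norm_of_nonneg ht₀.le] at hmin
      nlinarith
    have hlim : Tendsto (fun t : ℝ => r + t * (‖y - u‖ ^ 2 / 2)) (𝓝[>] 0) (𝓝 r) :=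
      tendsto_nhdsWithin_of_tendsto_nhds
        ((show Continuous fun t : ℝ => r + t * (‖y - u‖ ^ 2 / 2) by fun_prop).tendsto' 0 r
          (by simp))
    exact ge_of_tendsto hlim (by filter_upwards [Ioc_mem_nhdsGT one_pos] with t ht using key t ht)

theorem exists_sub_mem_subdiff [ProperSpace H] (hq : ProperFun q) (hconv : ConvexFun q)
    (hlsc : LowerSemicontinuous q) {x xstar : H} (hx : xstar ∈ subdiff q x) (z : H) :
    ∃ u, z - u ∈ subdiff q u :=
  (hq.exists_forall_add_sq_le hlsc hx z).imp fun _ => hq.sub_mem_subdiff_of_forall_add_sq_le hconv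

/-- `(q (P w)).toReal + ‖w - P w‖ ^ 2 / 2` is the Moreau envelope `e₁q`, `P` being the proximal
map. -/
theorem hasFDerivAt_moreauEnvelope (hq : ProperFun q) {P : H → H}
    (hP : ∀ z, z - P z ∈ subdiff q (P z)) (z : H) :
    HasFDerivAt (fun w => (q (P w)).toReal + ‖w - P w‖ ^ 2 / 2) (innerSL ℝ (z - P z)) z := by
  refine hasFDerivAt_of_sub_inner_le (C := 1 / 2)
    (hq.monotoneOperator_subdiff.lipschitzWith_sub_resolvent hP) (fun z z' => ?_) z
  have h := hq.toReal_add_inner_le (hP z') (hq.ne_top_of_mem_subdiff (hP z))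
  have e : z - P z = (z' - P z' - (P z - P z')) - (z' - z) := by abel
  rw [e, norm_sub_sq_real (z' - P z' - (P z - P z')), norm_sub_sq_real (z' - P z'),
    inner_sub_left _ (z' - z), inner_sub_left (z' - P z'), real_inner_self_eq_norm_sq]
  nlinarith [sq_nonneg ‖P z - P z'‖]

end ProperFun

/-- a linear structure inside the limiting coderivative of `∂q`:
there is a symmetric PSD matrix `G`, `‖G‖ ≤ 1`, with
`((I−G)v*, Gv*) ∈ gph D*(∂q)(x, x*)` for all `v*`. -/
theorem coderiv_subdiff_linear_structure
    {n : ℕ} (q : EuclideanSpace ℝ (Fin n) → EReal)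
    (hproper : ProperFun q) (hconv : ConvexFun q) (hlsc : LowerSemicontinuous q)
    (x xstar : EuclideanSpace ℝ (Fin n)) (hx : xstar ∈ subdiff q x) :
    ∃ G : EuclideanSpace ℝ (Fin n) →L[ℝ] EuclideanSpace ℝ (Fin n),
      IsSelfAdjoint G ∧ (∀ v, 0 ≤ ⟪G v, v⟫) ∧ ‖G‖ ≤ 1 ∧
      ∀ vstar, G vstar ∈ coderiv (subdiff q) x xstar (vstar - G vstar) := by
  choose P hP using hproper.exists_sub_mem_subdiff hconv hlsc hx
  have hT := hproper.monotoneOperator_subdiff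
  have hQ := hT.lipschitzWith_sub_resolvent hP
  have hsymm : ∀ z, DifferentiableAt ℝ (fun z => z - P z) z →
      (fderiv ℝ (fun z => z - P z) z).IsSymmetric := fun z hz =>
    isSymmetric_of_hasFDerivAt_gradient (hproper.hasFDerivAt_moreauEnvelope hP) hz.hasFDerivAt
  obtain ⟨G, hG⟩ := hQ.bSubdiff_nonempty (x + xstar)
  have hGpos : G.IsPositive := bSubdiff_subset ContinuousLinearMap.isClosed_setOf_isPositive
    (fun z hz => (ContinuousLinearMap.isPositive_iff _).2 ⟨hsymm z hz,
      hz.hasFDerivAt.inner_apply_self_nonneg (hT.inner_sub_resolvent_nonneg hP)⟩) hG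
  refine ⟨G, hGpos.isSelfAdjoint, hGpos.inner_nonneg_left, hQ.norm_le_of_mem_bSubdiff hG,
    fun v => ?_⟩
  have hnormal := hT.mem_gphLimitingNormal_of_mem_bSubdiff hP hsymm hG v
  rwa [hT.resolvent_add_eq hP hx, add_sub_cancel_left] at hnormal
end

section
/- Let M, G be n×n real matrices with G symmetric positive semidefinite and ‖G‖ ≤ 1, and let μ > 0. If ‖Mᵀ(I−G)u + Gu‖ ≥ μ‖(I−G)u‖ for all u ∈ ℝⁿ, then the matrix (I−G)M + G is nonsingular and ‖((I−G)M + G)^{-1}‖ ≤ 1 + (1/μ)‖M − I‖. -/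
open RealInnerProductSpace

set_option maxHeartbeats 1000000
set_option synthInstance.maxHeartbeats 400000

/-- linear-algebraic core of Proposition 4.2: if `G` is symmetric PSD
with `‖G‖ ≤ 1` and `‖Mᵀ(I−G)u + Gu‖ ≥ μ‖(I−G)u‖` for all `u`, then `(I−G)M + G`
is invertible with `‖((I−G)M + G)⁻¹‖ ≤ 1 + (1/μ)‖M − I‖`. -/
theorem inverse_bound_of_coderivative_estimate
    {n : ℕ} (M G : EuclideanSpace ℝ (Fin n) →L[ℝ] EuclideanSpace ℝ (Fin n))
    (hGsym : IsSelfAdjoint G) (hGpsd : ∀ v, 0 ≤ ⟪G v, v⟫) (hGnorm : ‖G‖ ≤ 1)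
    (μ : ℝ) (hμ : 0 < μ)
    (hkey : ∀ u, μ * ‖u - G u‖ ≤ ‖ContinuousLinearMap.adjoint M (u - G u) + G u‖) :
    ∃ S : EuclideanSpace ℝ (Fin n) →L[ℝ] EuclideanSpace ℝ (Fin n),
      ((1 - G) * M + G) * S = 1 ∧ S * ((1 - G) * M + G) = 1 ∧
      ‖S‖ ≤ 1 + (1 / μ) * ‖M - 1‖ := by
  set A : EuclideanSpace ℝ (Fin n) →L[ℝ] EuclideanSpace ℝ (Fin n) := (1 - G) * M + G with hA
  set k := ‖M - 1‖ with hk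
  have hk0 : 0 ≤ k := norm_nonneg _
  set c := 1 + (1 / μ) * k with hc
  have hc0 : 0 ≤ c := by positivity
  have hGadj : ContinuousLinearMap.adjoint G = G := by
    rw [← ContinuousLinearMap.star_eq_adjoint]; exact hGsym.star_eq
  have hadj1 : ContinuousLinearMap.adjoint
      (1 : EuclideanSpace ℝ (Fin n) →L[ℝ] EuclideanSpace ℝ (Fin n)) = 1 := by
    rw [ContinuousLinearMap.one_def, ContinuousLinearMap.adjoint_id]
  -- the adjoint of A
  have hAstar : ContinuousLinearMap.adjoint A = ContinuousLinearMap.adjoint M * (1 - G) + G := by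
    rw [hA, map_add, hGadj, ContinuousLinearMap.mul_def, ContinuousLinearMap.adjoint_comp,
      map_sub, hadj1, hGadj, ← ContinuousLinearMap.mul_def]
  have hAstar_apply : ∀ u, (ContinuousLinearMap.adjoint A) u
      = ContinuousLinearMap.adjoint M (u - G u) + G u := by
    intro u
    rw [hAstar]
    rfl
  -- ‖Mᵀ - 1‖ = ‖M - 1‖
  have hMk : ‖ContinuousLinearMap.adjoint M - 1‖ = k := by
    have h1 : ContinuousLinearMap.adjoint (M - 1) = ContinuousLinearMap.adjoint M - 1 := by
      rw [map_sub, hadj1]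
    rw [← h1]
    exact ContinuousLinearMap.adjoint.norm_map (M - 1)
  -- key estimate : ‖u‖ ≤ c * ‖(adjoint A) u‖
  have hest : ∀ u, ‖u‖ ≤ c * ‖(ContinuousLinearMap.adjoint A) u‖ := by
    intro u
    have h1 : (ContinuousLinearMap.adjoint A) u
        = u + (ContinuousLinearMap.adjoint M - 1) (u - G u) := by
      rw [hAstar_apply]
      simp only [ContinuousLinearMap.sub_apply, ContinuousLinearMap.one_apply]
      abel
    have h2 : ‖u - G u‖ ≤ (1 / μ) * ‖(ContinuousLinearMap.adjoint A) u‖ := by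
      have h := hkey u
      rw [← hAstar_apply u] at h
      calc ‖u - G u‖ = (1 / μ) * (μ * ‖u - G u‖) := by field_simp
        _ ≤ (1 / μ) * ‖(ContinuousLinearMap.adjoint A) u‖ :=
            mul_le_mul_of_nonneg_left h (by positivity)
    have h3 : ‖u‖ ≤ ‖(ContinuousLinearMap.adjoint A) u‖
        + ‖(ContinuousLinearMap.adjoint M - 1) (u - G u)‖ := by
      calc ‖u‖ = ‖(ContinuousLinearMap.adjoint A) u
            - (ContinuousLinearMap.adjoint M - 1) (u - G u)‖ := by
            rw [h1, add_sub_cancel_right]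
        _ ≤ _ := norm_sub_le _ _
    have h4 : ‖(ContinuousLinearMap.adjoint M - 1) (u - G u)‖ ≤ k * ‖u - G u‖ := by
      calc ‖(ContinuousLinearMap.adjoint M - 1) (u - G u)‖
          ≤ ‖ContinuousLinearMap.adjoint M - 1‖ * ‖u - G u‖ :=
            (ContinuousLinearMap.adjoint M - 1).le_opNorm _
        _ = k * ‖u - G u‖ := by rw [hMk]
    have h5 : 0 ≤ ‖(ContinuousLinearMap.adjoint A) u‖ := norm_nonneg _
    have h6 : 0 ≤ ‖u - G u‖ := norm_nonneg _
    calc ‖u‖ ≤ ‖(ContinuousLinearMap.adjoint A) u‖ + k * ‖u - G u‖ := by linarith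
      _ ≤ ‖(ContinuousLinearMap.adjoint A) u‖
          + k * ((1 / μ) * ‖(ContinuousLinearMap.adjoint A) u‖) := by nlinarith
      _ = c * ‖(ContinuousLinearMap.adjoint A) u‖ := by ring
  -- adjoint A is bijective
  have hinj : Function.Injective ⇑(ContinuousLinearMap.adjoint A) := by
    intro x y hxy
    have h := hest (x - y)
    rw [map_sub, hxy, sub_self, norm_zero, mul_zero] at h
    have h' : ‖x - y‖ = 0 := le_antisymm h (norm_nonneg _)
    rwa [norm_eq_zero, sub_eq_zero] at h'
  have hsurj : Function.Surjective ((ContinuousLinearMap.adjoint A).toLinearMap) :=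
    (LinearMap.injective_iff_surjective).mp hinj
  let e : EuclideanSpace ℝ (Fin n) ≃ₗ[ℝ] EuclideanSpace ℝ (Fin n) :=
    LinearEquiv.ofBijective ((ContinuousLinearMap.adjoint A).toLinearMap) ⟨hinj, hsurj⟩
  let B : EuclideanSpace ℝ (Fin n) →L[ℝ] EuclideanSpace ℝ (Fin n) :=
    LinearMap.toContinuousLinearMap (e.symm : _ →ₗ[ℝ] _)
  have hBA : B * (ContinuousLinearMap.adjoint A) = 1 := by
    refine ContinuousLinearMap.ext fun v => ?_
    show e.symm (e v) = v
    exact e.symm_apply_apply v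
  have hAB : (ContinuousLinearMap.adjoint A) * B = 1 := by
    refine ContinuousLinearMap.ext fun v => ?_
    show e (e.symm v) = v
    exact e.apply_symm_apply v
  refine ⟨ContinuousLinearMap.adjoint B, ?_, ?_, ?_⟩
  · have h := congrArg (fun f => ContinuousLinearMap.adjoint f) hBA
    simp only [ContinuousLinearMap.mul_def] at h
    rw [ContinuousLinearMap.adjoint_comp, ContinuousLinearMap.adjoint_adjoint, hadj1,
      ← ContinuousLinearMap.mul_def] at h
    exact h
  · have h := congrArg (fun f => ContinuousLinearMap.adjoint f) hAB
    simp only [ContinuousLinearMap.mul_def] at h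
    rw [ContinuousLinearMap.adjoint_comp, ContinuousLinearMap.adjoint_adjoint, hadj1,
      ← ContinuousLinearMap.mul_def] at h
    exact h
  · rw [show ‖ContinuousLinearMap.adjoint B‖ = ‖B‖ from
      ContinuousLinearMap.adjoint.norm_map B]
    refine ContinuousLinearMap.opNorm_le_bound _ hc0 fun v => ?_
    have h1 : (ContinuousLinearMap.adjoint A) (B v) = v := by
      have h := congrArg (fun f => f v) hAB
      simpa using h
    have h2 := hest (B v)
    rwa [h1] at h2
end

section
/- Assume f : ℝⁿ → ℝⁿ is continuously differentiable and monotone. For x ∈ ℝⁿ let μ_f(x) := min_{‖u‖=1} ⟨∇f(x)u, u⟩, and for d ∈ dom ∂q let μ_q(d) := lim_{ρ↓0} inf { ⟨d₁*−d₂*, d₁−d₂⟩/‖d₁−d₂‖² : dᵢ ∈ B_ρ(d), (dᵢ, dᵢ*) ∈ gph ∂q, d₁ ≠ d₂ }. Then for every d* ∈ ∂q(d), min_{‖s‖=1} dist(0, ∇f(x)ᵀs + D*(∂q)(d, d*)(s)) ≥ μ_f(x) + μ_q(d). -/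
open RealInnerProductSpace Set Filter Topology

variable {H : Type*} [NormedAddCommGroup H] [InnerProductSpace ℝ H]

/-!
On a ball `B_ρ(d)` the subdifferential `∂q` is strongly monotone with modulus `m_ρ`, the infimum
of the monotonicity ratios, and `∂q` is maximal monotone: minimizing `q + ‖· - z‖² / (2λ)` splits
every `z` as `u + λ v` with `v ∈ ∂q u`. Moving `z` away from `x + λ y` along a direction `e`
produces graph points at distance `O(t)` from `(x, y)`; testing a Fréchet normal `(p₁, p₂)` at
`(x, y)` against them gives `‖p₂‖ (1 + λ m) ≤ ‖p₂ - λ p₁‖`, and `λ → 0` yields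
`⟪p₁, p₂⟫ + m ‖p₂‖² ≤ 0`, which passes to limiting normals. For `w ∈ D*(∂q)(d, d*)(s)` this reads
`m_ρ ≤ ⟪w, s⟫`; together with `μ_f(x) ≤ ⟪∇f(x) s, s⟫` and Cauchy–Schwarz applied to
`⟪∇f(x)ᵀ s + w, s⟫` this gives the bound.
-/

theorem le_of_forall_le_add_mul {a b c : ℝ} (h : ∀ t : ℝ, 0 < t → t ≤ 1 → a ≤ b + t * c) :
    a ≤ b := by
  have hlim : Tendsto (fun t => b + t * c) (𝓝[>] 0) (𝓝 b) := by
    have h0 : Tendsto (fun t => b + t * c) (𝓝 0) (𝓝 (b + 0 * c)) :=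
      (continuous_const.add (continuous_id.mul continuous_const)).tendsto 0
    simpa using tendsto_nhdsWithin_of_tendsto_nhds h0
  refine ge_of_tendsto hlim ?_
  filter_upwards [Ioc_mem_nhdsGT one_pos] with t ht using h t ht.1 ht.2

theorem LowerSemicontinuous.exists_forall_le' {X β : Type*} [TopologicalSpace X] [LinearOrder β]
    {φ : X → β} (hφ : LowerSemicontinuous φ) (x₀ : X) (h : ∀ᶠ x in cocompact X, φ x₀ ≤ φ x) :
    ∃ x, ∀ y, φ x ≤ φ y := by
  obtain ⟨K, hK, hKc⟩ := mem_cocompact.1 h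
  obtain ⟨x, -, hmin⟩ :=
    (hφ.lowerSemicontinuousOn _).exists_isMinOn (insert_nonempty x₀ K) (hK.insert x₀)
  refine ⟨x, fun y => ?_⟩
  by_cases hy : y ∈ K
  · exact hmin (mem_insert_of_mem x₀ hy)
  · exact (hmin (mem_insert x₀ K)).trans (hKc hy)

theorem mul_norm_le_norm_add_smul {m lam : ℝ} {Δ η : H} (hlam : 0 ≤ lam)
    (h : m * ‖Δ‖ ^ 2 ≤ ⟪η, Δ⟫) : (1 + lam * m) * ‖Δ‖ ≤ ‖Δ + lam • η‖ := by
  rcases (norm_nonneg Δ).eq_or_lt with hΔ | hΔ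
  · rw [← hΔ, mul_zero]; exact norm_nonneg _
  refine le_of_mul_le_mul_right ?_ hΔ
  calc (1 + lam * m) * ‖Δ‖ * ‖Δ‖ = ‖Δ‖ ^ 2 + lam * (m * ‖Δ‖ ^ 2) := by ring
    _ ≤ ‖Δ‖ ^ 2 + lam * ⟪η, Δ⟫ := by gcongr
    _ = ⟪Δ + lam • η, Δ⟫ := by
      rw [inner_add_left, real_inner_smul_left, real_inner_self_eq_norm_sq]
    _ ≤ ‖Δ + lam • η‖ * ‖Δ‖ := real_inner_le_norm _ _

def IsStronglyMonotoneOn (Φ : H → Set H) (m : ℝ) (S : Set H) : Prop :=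
  ∀ ⦃u₁⦄, u₁ ∈ S → ∀ ⦃u₂⦄, u₂ ∈ S → ∀ ⦃v₁⦄, v₁ ∈ Φ u₁ → ∀ ⦃v₂⦄, v₂ ∈ Φ u₂ →
    m * ‖u₁ - u₂‖ ^ 2 ≤ ⟪v₁ - v₂, u₁ - u₂⟫

theorem ProperFun.ne_top_of_mem_subdiff_s12 {q : H → EReal} (hq : ProperFun q) {u v : H}
    (hv : v ∈ subdiff q u) : q u ≠ ⊤ := by
  intro htop
  obtain ⟨y, hy⟩ := hq.1
  have := hv y
  rw [htop, EReal.top_add_coe, top_le_iff] at this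
  exact hy this

theorem ProperFun.exists_eq_coe_of_mem_subdiff {q : H → EReal} (hq : ProperFun q) {u v : H}
    (hv : v ∈ subdiff q u) : ∃ a : ℝ, q u = a :=
  ⟨_, (EReal.coe_toReal (hq.ne_top_of_mem_subdiff_s12 hv) (hq.2 u)).symm⟩

theorem ProperFun.isStronglyMonotoneOn_subdiff {q : H → EReal} (hq : ProperFun q) :
    IsStronglyMonotoneOn (subdiff q) 0 univ := by
  intro u₁ _ u₂ _ v₁ hv₁ v₂ hv₂
  obtain ⟨a₁, ha₁⟩ := hq.exists_eq_coe_of_mem_subdiff hv₁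
  obtain ⟨a₂, ha₂⟩ := hq.exists_eq_coe_of_mem_subdiff hv₂
  have h₁ := hv₁ u₂
  have h₂ := hv₂ u₁
  rw [ha₁, ha₂, ← EReal.coe_add, EReal.coe_le_coe_iff] at h₁ h₂
  have : ⟪v₁ - v₂, u₁ - u₂⟫ = -⟪v₁, u₂ - u₁⟫ - ⟪v₂, u₁ - u₂⟫ := by
    simp only [inner_sub_left, inner_sub_right]; ring
  rw [zero_mul, this]
  linarith

theorem ConvexFun.apply_add_smul_sub_le {q : H → EReal} (hq : ConvexFun q) {u y : H} {a b t : ℝ}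
    (hu : q u ≤ a) (hy : q y ≤ b) (ht₀ : 0 ≤ t) (ht₁ : t ≤ 1) :
    q (u + t • (y - u)) ≤ ((a + t * (b - a) : ℝ) : EReal) := by
  have h := hq (x := (u, a)) hu (y := (y, b)) hy (sub_nonneg.2 ht₁) ht₀ (sub_add_cancel 1 t)
  have hpt : (1 - t) • (u, a) + t • (y, b) = (u + t • (y - u), a + t * (b - a)) := by
    ext
    · simp only [Prod.fst_add, Prod.smul_fst]; module
    · simp only [Prod.snd_add, Prod.smul_snd, smul_eq_mul]; ring
  rwa [hpt] at h

theorem mem_subdiff_of_forall_add_norm_sub_sq_le {q : H → EReal} (hq : ConvexFun q) {u z : H}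
    {lam a : ℝ} (hlam : 0 < lam) (hu : q u = a)
    (hmin : ∀ v, q u + ((‖u - z‖ ^ 2 / (2 * lam) : ℝ) : EReal) ≤
      q v + ((‖v - z‖ ^ 2 / (2 * lam) : ℝ) : EReal)) :
    lam⁻¹ • (z - u) ∈ subdiff q u := by
  intro y
  refine EReal.le_of_forall_lt_iff_le.1 fun b hb => ?_
  rw [hu, ← EReal.coe_add, EReal.coe_le_coe_iff]
  refine le_of_forall_le_add_mul (c := ‖y - u‖ ^ 2 / (2 * lam)) fun t ht₀ ht₁ => ?_
  have hconv := hq.apply_add_smul_sub_le hu.le hb.le ht₀.le ht₁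
  have h := (hmin (u + t • (y - u))).trans (add_le_add_left hconv _)
  rw [hu, ← EReal.coe_add, ← EReal.coe_add, EReal.coe_le_coe_iff] at h
  have hsq : ‖u + t • (y - u) - z‖ ^ 2 =
      ‖u - z‖ ^ 2 + 2 * t * ⟪u - z, y - u⟫ + t ^ 2 * ‖y - u‖ ^ 2 := by
    rw [show u + t • (y - u) - z = (u - z) + t • (y - u) by abel, norm_add_sq_real,
      real_inner_smul_right, norm_smul, Real.norm_eq_abs, abs_of_pos ht₀]
    ring
  have hinner : ⟪lam⁻¹ • (z - u), y - u⟫ = -⟪u - z, y - u⟫ / lam := by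
    rw [real_inner_smul_left, ← neg_sub u z, inner_neg_left]; ring
  rw [hsq] at h
  have key : t * (2 * lam * a - 2 * ⟪u - z, y - u⟫) ≤ t * (2 * lam * b + t * ‖y - u‖ ^ 2) := by
    field_simp at h
    linarith
  have hcancel := le_of_mul_le_mul_left key ht₀
  rw [hinner]
  field_simp
  linarith

theorem exists_forall_add_norm_sub_sq_le [ProperSpace H] {q : H → EReal}
    (hlsc : LowerSemicontinuous q) {d dstar : H} (hd : dstar ∈ subdiff q d) {lam : ℝ}
    (hlam : 0 < lam) (z : H) :
    ∃ u, ∀ v, q u + ((‖u - z‖ ^ 2 / (2 * lam) : ℝ) : EReal) ≤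
      q v + ((‖v - z‖ ^ 2 / (2 * lam) : ℝ) : EReal) := by
  set g : H → ℝ := fun v => ‖v - z‖ ^ 2 / (2 * lam)
  have hφ : LowerSemicontinuous fun v => q v + (g v : EReal) :=
    hlsc.add' (continuous_coe_real_ereal.comp (by fun_prop)).lowerSemicontinuous fun v =>
      EReal.continuousAt_add (Or.inr (EReal.coe_ne_bot _)) (Or.inr (EReal.coe_ne_top _))
  -- the affine minorant of `q` at `d` makes the objective coercive
  have hgrowth : Tendsto (fun v => ⟪dstar, v - d⟫ + g v - g d) (cocompact H) atTop := by
    have hlow : ∀ v, ‖v - z‖ ^ 2 / (4 * lam) + (⟪dstar, z - d⟫ - lam * ‖dstar‖ ^ 2 - g d) ≤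
        ⟪dstar, v - d⟫ + g v - g d := by
      intro v
      have hcs : -(‖dstar‖ * ‖v - z‖) ≤ ⟪dstar, v - z⟫ := by
        have := abs_real_inner_le_norm dstar (v - z); rw [abs_le] at this; exact this.1
      have hamgm : ‖dstar‖ * ‖v - z‖ ≤ ‖v - z‖ ^ 2 / (4 * lam) + lam * ‖dstar‖ ^ 2 := by
        rw [div_add' _ _ _ (by positivity), le_div_iff₀ (by positivity)]
        nlinarith [sq_nonneg (‖v - z‖ - 2 * lam * ‖dstar‖)]
      have hsplit : ⟪dstar, v - d⟫ = ⟪dstar, v - z⟫ + ⟪dstar, z - d⟫ := by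
        rw [← inner_add_right, sub_add_sub_cancel]
      have hg : g v = 2 * (‖v - z‖ ^ 2 / (4 * lam)) := by simp only [g]; field_simp; ring
      linarith
    refine tendsto_atTop_mono hlow (tendsto_atTop_add_const_right _ _ ?_)
    simpa only [dist_eq_norm, Function.comp_def] using
      ((tendsto_pow_atTop two_ne_zero).comp (tendsto_dist_right_cocompact_atTop z)).atTop_div_const
        (by positivity : (0 : ℝ) < 4 * lam)
  refine hφ.exists_forall_le' d ?_
  filter_upwards [hgrowth.eventually_ge_atTop 0] with v hv
  calc q d + (g d : EReal) ≤ q d + (g d : EReal) + ((⟪dstar, v - d⟫ + g v - g d : ℝ) : EReal) :=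
        le_add_of_nonneg_right (EReal.coe_nonneg.2 hv)
    _ = q d + ((⟪dstar, v - d⟫ : ℝ) : EReal) + (g v : EReal) := by
        rw [add_assoc, add_assoc, ← EReal.coe_add, ← EReal.coe_add]; ring_nf
    _ ≤ q v + (g v : EReal) := add_le_add_left (hd v) _

theorem ProperFun.exists_add_smul_eq_of_mem_subdiff [FiniteDimensional ℝ H] {q : H → EReal}
    (hproper : ProperFun q) (hconv : ConvexFun q) (hlsc : LowerSemicontinuous q) {d dstar : H}
    (hd : dstar ∈ subdiff q d) {lam : ℝ} (hlam : 0 < lam) (z : H) :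
    ∃ u v, v ∈ subdiff q u ∧ u + lam • v = z := by
  obtain ⟨u, hu⟩ := exists_forall_add_norm_sub_sq_le hlsc hd hlam z
  have hfin : q u ≠ ⊤ := by
    intro htop
    obtain ⟨a, ha⟩ := hproper.exists_eq_coe_of_mem_subdiff hd
    have := hu d
    rw [htop, EReal.top_add_coe, top_le_iff, ha, ← EReal.coe_add] at this
    exact EReal.coe_ne_top _ this
  refine ⟨u, lam⁻¹ • (z - u), mem_subdiff_of_forall_add_norm_sub_sq_le hconv hlam
    (EReal.coe_toReal hfin (hproper.2 u)).symm hu, ?_⟩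
  rw [smul_smul, mul_inv_cancel₀ hlam.ne', one_smul, add_sub_cancel]

theorem exists_mem_smul_sub_eq_of_isStronglyMonotoneOn {Φ : H → Set H} {m lam r t : ℝ} {S : Set H} {x y e : H}
    (hmono : IsStronglyMonotoneOn Φ 0 univ) (hstrong : IsStronglyMonotoneOn Φ m S)
    (hball : Metric.ball x r ⊆ S) (hlam : 0 < lam)
    (hminty : ∀ z, ∃ u v, v ∈ Φ u ∧ u + lam • v = z) (hy : y ∈ Φ x) (he : ‖e‖ ≤ 1)
    (ht : 0 < t) (htr : t < r) :
    ∃ u v, v ∈ Φ u ∧ lam • (v - y) = t • e - (u - x) ∧ ‖lam • (v - y)‖ ≤ 2 * t ∧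
      (1 + lam * m) * ‖u - x‖ ≤ t := by
  obtain ⟨u, v, hv, huv⟩ := hminty (x + lam • y + t • e)
  have hsum : (u - x) + lam • (v - y) = t • e := by
    rw [smul_sub, ← sub_eq_zero, ← sub_eq_zero.2 huv]; abel
  have hte : ‖t • e‖ ≤ t := by
    rw [norm_smul, Real.norm_eq_abs, abs_of_pos ht]; nlinarith
  have hΔ : ‖u - x‖ ≤ t := by
    have := mul_norm_le_norm_add_smul hlam.le (hmono (mem_univ u) (mem_univ x) hv hy)
    rw [mul_zero, add_zero, one_mul, hsum] at this
    exact this.trans hte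
  have hu : u ∈ S := hball (by rw [Metric.mem_ball, dist_eq_norm]; linarith)
  have hΔm := mul_norm_le_norm_add_smul hlam.le (hstrong hu (hball (Metric.mem_ball_self
    (ht.trans htr))) hv hy)
  rw [hsum] at hΔm
  have hlη : lam • (v - y) = t • e - (u - x) := by rw [← hsum]; abel
  refine ⟨u, v, hv, hlη, ?_, hΔm.trans hte⟩
  rw [hlη]
  linarith [norm_sub_le (t • e) (u - x)]

theorem inner_mul_le_norm_sub_smul_of_mem_gphFrechetNormal {Φ : H → Set H} {m lam : ℝ}
    {S : Set H} {x y e : H} {p : H × H} (hmono : IsStronglyMonotoneOn Φ 0 univ)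
    (hstrong : IsStronglyMonotoneOn Φ m S) (hS : S ∈ 𝓝 x) (hm : 0 ≤ m) (hlam : 0 < lam)
    (hminty : ∀ z, ∃ u v, v ∈ Φ u ∧ u + lam • v = z) (hy : y ∈ Φ x)
    (hp : p ∈ gphFrechetNormal Φ x y) (he : ‖e‖ ≤ 1) :
    ⟪p.2, e⟫ * (1 + lam * m) ≤ ‖p.2 - lam • p.1‖ := by
  obtain ⟨r, hr, hball⟩ := Metric.mem_nhds_iff.1 hS
  have hlm : 0 < 1 + lam * m := by positivity
  refine le_of_forall_le_add_mul (c := (lam + 2) * (1 + lam * m)) fun ε hε _ => ?_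
  obtain ⟨δ, hδ, hF⟩ := hp ε hε
  obtain ⟨t, ht, htδ, htr, htlam⟩ : ∃ t : ℝ, 0 < t ∧ t < δ ∧ t < r ∧ 2 * t < lam * δ := by
    refine ⟨min (min δ r) (lam * δ / 2) / 2, by positivity, ?_, ?_, ?_⟩ <;>
      linarith [min_le_left (min δ r) (lam * δ / 2), min_le_right (min δ r) (lam * δ / 2),
        min_le_left δ r, min_le_right δ r, mul_pos hlam hδ]
  obtain ⟨u, v, hv, hlη, hη, hΔm⟩ :=
    exists_mem_smul_sub_eq_of_isStronglyMonotoneOn hmono hstrong hball hlam hminty hy he ht htr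
  have hΔ : ‖u - x‖ ≤ t := by
    nlinarith [mul_nonneg (mul_nonneg hlam.le hm) (norm_nonneg (u - x))]
  have hηδ : ‖v - y‖ < δ := by
    rw [norm_smul, Real.norm_eq_abs, abs_of_pos hlam] at hη
    nlinarith
  have hfr := hF u v hv (by linarith) hηδ
  have key : t * ⟪p.2, e⟫ ≤ ‖p.2 - lam • p.1‖ * ‖u - x‖ + ε * (t * (lam + 2)) := by
    have hfr' : lam * ⟪p.1, u - x⟫ + ⟪p.2, lam • (v - y)⟫ ≤
        ε * (lam * ‖u - x‖ + ‖lam • (v - y)‖) := by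
      rw [real_inner_smul_right, norm_smul, Real.norm_eq_abs, abs_of_pos hlam]
      nlinarith
    have hinner : ⟪p.2, lam • (v - y)⟫ = t * ⟪p.2, e⟫ - ⟪p.2, u - x⟫ := by
      rw [hlη, inner_sub_right, real_inner_smul_right]
    have hcs := real_inner_le_norm (p.2 - lam • p.1) (u - x)
    rw [inner_sub_left, real_inner_smul_left] at hcs
    have herr : ε * (lam * ‖u - x‖ + ‖lam • (v - y)‖) ≤ ε * (t * (lam + 2)) := by
      gcongr; nlinarith
    linarith
  have hN := norm_nonneg (p.2 - lam • p.1)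
  refine le_of_mul_le_mul_left ?_ ht
  nlinarith [mul_le_mul_of_nonneg_left hΔm hN, mul_le_mul_of_nonneg_right key hlm.le]

theorem inner_add_mul_norm_sq_nonpos_of_mem_gphFrechetNormal {Φ : H → Set H} {m : ℝ}
    {S : Set H} {x y : H} {p : H × H} (hmono : IsStronglyMonotoneOn Φ 0 univ)
    (hstrong : IsStronglyMonotoneOn Φ m S) (hS : S ∈ 𝓝 x) (hm : 0 ≤ m)
    (hminty : ∀ lam : ℝ, 0 < lam → ∀ z, ∃ u v, v ∈ Φ u ∧ u + lam • v = z) (hy : y ∈ Φ x)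
    (hp : p ∈ gphFrechetNormal Φ x y) :
    ⟪p.1, p.2⟫ + m * ‖p.2‖ ^ 2 ≤ 0 := by
  rcases eq_or_ne p.2 0 with h0 | h0
  · simp [h0]
  refine le_of_forall_le_add_mul (c := ‖p.1‖ ^ 2 / 2) fun lam hlam _ => ?_
  have h := inner_mul_le_norm_sub_smul_of_mem_gphFrechetNormal hmono hstrong hS hm hlam
    (hminty lam hlam) hy hp (e := ‖p.2‖⁻¹ • p.2)
    (by rw [norm_smul, norm_inv, norm_norm, inv_mul_cancel₀ (norm_ne_zero_iff.2 h0)])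
  rw [real_inner_smul_right, real_inner_self_eq_norm_sq,
    show ‖p.2‖⁻¹ * ‖p.2‖ ^ 2 = ‖p.2‖ by field_simp] at h
  have hsq := pow_le_pow_left₀ (by positivity) h 2
  rw [norm_sub_sq_real, real_inner_smul_right, norm_smul, Real.norm_eq_abs, abs_of_pos hlam,
    real_inner_comm] at hsq
  nlinarith [mul_nonneg (mul_nonneg hlam.le hlam.le) (mul_nonneg hm hm),
    sq_nonneg ‖p.2‖]

theorem mul_norm_sq_le_inner_of_mem_coderiv {Φ : H → Set H} {m : ℝ} {S : Set H} {d y s w : H}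
    (hmono : IsStronglyMonotoneOn Φ 0 univ) (hstrong : IsStronglyMonotoneOn Φ m S)
    (hS : S ∈ 𝓝 d) (hm : 0 ≤ m)
    (hminty : ∀ lam : ℝ, 0 < lam → ∀ z, ∃ u v, v ∈ Φ u ∧ u + lam • v = z)
    (hw : w ∈ coderiv Φ d y s) :
    m * ‖s‖ ^ 2 ≤ ⟪w, s⟫ := by
  obtain ⟨xs, ys, ps, hgr, hxs, -, hps⟩ := hw
  have hlim : Tendsto (fun k => ⟪(ps k).1, (ps k).2⟫ + m * ‖(ps k).2‖ ^ 2) atTop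
      (𝓝 (⟪w, -s⟫ + m * ‖-s‖ ^ 2)) :=
    ((by fun_prop : Continuous fun p : H × H => ⟪p.1, p.2⟫ + m * ‖p.2‖ ^ 2).tendsto _).comp hps
  have hnonpos : ⟪w, -s⟫ + m * ‖-s‖ ^ 2 ≤ 0 := by
    refine le_of_tendsto hlim ?_
    filter_upwards [hxs.eventually (eventually_mem_nhds_iff.2 hS)] with k hk
    exact inner_add_mul_norm_sq_nonpos_of_mem_gphFrechetNormal hmono hstrong hk hm hminty
      (hgr k).1 (hgr k).2
  rw [inner_neg_right, norm_neg] at hnonpos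
  linarith

def monotonicityRatios (Φ : H → Set H) (d : H) (ρ : ℝ) : Set ℝ :=
  {r : ℝ | ∃ d₁ d₂ ds₁ ds₂, ds₁ ∈ Φ d₁ ∧ ds₂ ∈ Φ d₂ ∧ ‖d₁ - d‖ ≤ ρ ∧ ‖d₂ - d‖ ≤ ρ ∧ d₁ ≠ d₂ ∧
    r = ⟪ds₁ - ds₂, d₁ - d₂⟫ / ‖d₁ - d₂‖ ^ 2}

theorem nonneg_of_mem_monotonicityRatios {Φ : H → Set H} (hmono : IsStronglyMonotoneOn Φ 0 univ)
    {d : H} {ρ r : ℝ} (hr : r ∈ monotonicityRatios Φ d ρ) : 0 ≤ r := by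
  obtain ⟨d₁, d₂, ds₁, ds₂, h₁, h₂, -, -, -, rfl⟩ := hr
  have := hmono (mem_univ d₁) (mem_univ d₂) h₁ h₂
  rw [zero_mul] at this
  positivity

theorem isStronglyMonotoneOn_sInf_monotonicityRatios {Φ : H → Set H}
    (hmono : IsStronglyMonotoneOn Φ 0 univ) (d : H) (ρ : ℝ) :
    IsStronglyMonotoneOn Φ (sInf (monotonicityRatios Φ d ρ)) (Metric.closedBall d ρ) := by
  intro u₁ hu₁ u₂ hu₂ v₁ hv₁ v₂ hv₂
  rcases eq_or_ne u₁ u₂ with rfl | hne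
  · simp
  have hpos : 0 < ‖u₁ - u₂‖ ^ 2 := by positivity [sub_ne_zero.2 hne]
  rw [← le_div_iff₀ hpos]
  exact csInf_le ⟨0, fun r => nonneg_of_mem_monotonicityRatios hmono⟩
    ⟨u₁, u₂, v₁, v₂, hv₁, hv₂, mem_closedBall_iff_norm.1 hu₁, mem_closedBall_iff_norm.1 hu₂,
      hne, rfl⟩

theorem sInf_inner_apply_self_le {A : H →L[ℝ] H} {s : H} (hs : ‖s‖ = 1) :
    sInf {r : ℝ | ∃ u, ‖u‖ = 1 ∧ r = ⟪A u, u⟫} ≤ ⟪A s, s⟫ := by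
  refine csInf_le ⟨-‖A‖, ?_⟩ ⟨s, hs, rfl⟩
  rintro r ⟨u, hu, rfl⟩
  have hcs := abs_real_inner_le_norm (A u) u
  have hA := A.le_opNorm u
  rw [hu, mul_one] at hcs hA
  exact neg_le_of_abs_le (hcs.trans hA)

theorem coderiv_dist_lower_bound_general
    {n : ℕ} (f : EuclideanSpace ℝ (Fin n) → EuclideanSpace ℝ (Fin n))
    (q : EuclideanSpace ℝ (Fin n) → EReal)
    (hproper : ProperFun q) (hconv : ConvexFun q) (hlsc : LowerSemicontinuous q)
    (x d dstar : EuclideanSpace ℝ (Fin n)) (hd : dstar ∈ subdiff q d) :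
    ∀ s, ‖s‖ = 1 → ∀ w ∈ coderiv (subdiff q) d dstar s,
      (sInf {r : ℝ | ∃ u, ‖u‖ = 1 ∧ r = ⟪fderiv ℝ f x u, u⟫}) +
        (⨆ ρ : {ρ : ℝ // 0 < ρ}, sInf {r : ℝ | ∃ d₁ d₂ ds₁ ds₂,
          ds₁ ∈ subdiff q d₁ ∧ ds₂ ∈ subdiff q d₂ ∧
          ‖d₁ - d‖ ≤ ρ.1 ∧ ‖d₂ - d‖ ≤ ρ.1 ∧ d₁ ≠ d₂ ∧
          r = ⟪ds₁ - ds₂, d₁ - d₂⟫ / ‖d₁ - d₂‖ ^ 2}) ≤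
      ‖ContinuousLinearMap.adjoint (fderiv ℝ f x) s + w‖ := by
  intro s hs w hw
  set A := fderiv ℝ f x
  have hmono := hproper.isStronglyMonotoneOn_subdiff
  have hμq : (⨆ ρ : {ρ : ℝ // 0 < ρ}, sInf (monotonicityRatios (subdiff q) d ρ.1)) ≤ ⟪w, s⟫ := by
    have : Nonempty {ρ : ℝ // 0 < ρ} := ⟨⟨1, one_pos⟩⟩
    refine ciSup_le fun ρ => ?_
    have := mul_norm_sq_le_inner_of_mem_coderiv hmono
      (isStronglyMonotoneOn_sInf_monotonicityRatios hmono d ρ.1)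
      (Metric.closedBall_mem_nhds d ρ.2)
      (Real.sInf_nonneg fun r => nonneg_of_mem_monotonicityRatios hmono)
      (fun lam hlam => hproper.exists_add_smul_eq_of_mem_subdiff hconv hlsc hd hlam) hw
    rwa [hs, one_pow, mul_one] at this
  calc _ ≤ ⟪A s, s⟫ + ⟪w, s⟫ := add_le_add (sInf_inner_apply_self_le hs) hμq
    _ = ⟪ContinuousLinearMap.adjoint A s + w, s⟫ := by
      rw [inner_add_left, ContinuousLinearMap.adjoint_inner_left, real_inner_comm]
    _ ≤ ‖ContinuousLinearMap.adjoint A s + w‖ := by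
      simpa [hs] using real_inner_le_norm (ContinuousLinearMap.adjoint A s + w) s

/-- coderivative lower bound
`min_{‖s‖=1} dist(0, ∇f(x)ᵀs + D*(∂q)(d,d*)(s)) ≥ μ_f(x) + μ_q(d)`. -/
theorem coderiv_dist_lower_bound
    {n : ℕ} (f : EuclideanSpace ℝ (Fin n) → EuclideanSpace ℝ (Fin n))
    (q : EuclideanSpace ℝ (Fin n) → EReal)
    (hf : ContDiff ℝ 1 f)
    (hmono : ∀ x₁ x₂, 0 ≤ ⟪f x₂ - f x₁, x₂ - x₁⟫)
    (hproper : ProperFun q) (hconv : ConvexFun q) (hlsc : LowerSemicontinuous q)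
    (x d dstar : EuclideanSpace ℝ (Fin n)) (hd : dstar ∈ subdiff q d) :
    ∀ s, ‖s‖ = 1 → ∀ w ∈ coderiv (subdiff q) d dstar s,
      (sInf {r : ℝ | ∃ u, ‖u‖ = 1 ∧ r = ⟪fderiv ℝ f x u, u⟫}) +
        (⨆ ρ : {ρ : ℝ // 0 < ρ}, sInf {r : ℝ | ∃ d₁ d₂ ds₁ ds₂,
          ds₁ ∈ subdiff q d₁ ∧ ds₂ ∈ subdiff q d₂ ∧
          ‖d₁ - d‖ ≤ ρ.1 ∧ ‖d₂ - d‖ ≤ ρ.1 ∧ d₁ ≠ d₂ ∧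
          r = ⟪ds₁ - ds₂, d₁ - d₂⟫ / ‖d₁ - d₂‖ ^ 2}) ≤
      ‖ContinuousLinearMap.adjoint (fderiv ℝ f x) s + w‖ :=
  coderiv_dist_lower_bound_general f q hproper hconv hlsc x d dstar hd
end

section
/- Let F : ℝⁿ ⇉ ℝⁿ be semismooth* at (x̄, 0) ∈ gph F and suppose there exist δ̄ > 0 and κ > 0 such that for every (x,y) ∈ gph F with ‖(x,y) − (x̄,0)‖ ≤ δ̄ there is a pair of n×n matrices (A,B) whose rows (x_i*ᵀ, y_i*ᵀ) come from graph points (y_i*, x_i*) of D*F(x,y), with A nonsingular and ‖A^{-1}‖‖(A ⋮ B)‖_F ≤ κ. Then x̄ is an isolated solution of the inclusion 0 ∈ F(x). -/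
open RealInnerProductSpace Set Filter Topology

variable {H : Type*} [NormedAddCommGroup H] [InnerProductSpace ℝ H]

/-- The directional limiting normal cone to the graph of `Φ` at `(x, y)` in
direction `(u, v)`. -/
def gphDirLimitingNormal (Φ : H → Set H) (x y u v : H) : Set (H × H) :=
  {p | ∃ (t : ℕ → ℝ) (du dv : ℕ → H) (ps : ℕ → H × H),
    (∀ k, 0 < t k ∧ (y + t k • dv k) ∈ Φ (x + t k • du k) ∧
      ps k ∈ gphFrechetNormal Φ (x + t k • du k) (y + t k • dv k)) ∧
    Tendsto t atTop (nhds 0) ∧ Tendsto du atTop (nhds u) ∧ Tendsto dv atTop (nhds v) ∧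
    Tendsto ps atTop (nhds p)}

/-- `Φ` is semismooth* at `(x, y) ∈ gph Φ`: for all directions `(u,v)` and all
`(v*, u*)` in the graph of the directional limiting coderivative (i.e. all
`(u*, −v*)` in the directional limiting normal cone), `⟨u*, u⟩ = ⟨v*, v⟩`. -/
def SemismoothStar (Φ : H → Set H) (x y : H) : Prop :=
  ∀ u v : H, ∀ p ∈ gphDirLimitingNormal Φ x y u v, ⟪p.1, u⟫ + ⟪p.2, v⟫ = 0

/-- The Frobenius norm of the horizontal block concatenation `(A ⋮ B)`. -/
noncomputable def frobBlockNorm {n : ℕ} (A B : Matrix (Fin n) (Fin n) ℝ) : ℝ :=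
  Real.sqrt ((∑ i, ∑ j, A i j ^ 2) + ∑ i, ∑ j, B i j ^ 2)

/-! If `x̄` were not isolated, there would be solutions `x_k → x̄`, `x_k ≠ x̄`. At each of them
some row `(a_i, b_i)` of `(A ⋮ B)` satisfies `‖(a_i, b_i)‖ ‖x_k - x̄‖ ≤ κ |⟪a_i, x_k - x̄⟫|`,
because `‖d‖ ≤ ‖A⁻¹‖ ‖A d‖` and the squared Frobenius norm is the sum of the squared row norms;
so `(a_i, -b_i)` is a limiting normal to `gph F` at `(x_k, 0)` that stays uniformly
non-orthogonal to the displacement. Normalising and extracting convergent subsequences, a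
diagonal argument turns the limit into a directional limiting normal `(u*, w)` in a unit
direction `(u, 0)` with `⟪u*, u⟫ ≠ 0`, which semismoothness* forbids. -/

section Normals

variable {Φ : H → Set H} {x y : H} {p : H × H}

lemma smul_mem_gphFrechetNormal {c : ℝ} (hc : 0 < c) (hp : p ∈ gphFrechetNormal Φ x y) :
    c • p ∈ gphFrechetNormal Φ x y := by
  intro ε hε
  obtain ⟨δ, hδ, hp⟩ := hp (ε / c) (div_pos hε hc)
  refine ⟨δ, hδ, fun x' y' hy' hx hy => ?_⟩
  calc ⟪(c • p).1, x' - x⟫ + ⟪(c • p).2, y' - y⟫ = c * (⟪p.1, x' - x⟫ + ⟪p.2, y' - y⟫) := by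
        simp only [Prod.smul_fst, Prod.smul_snd, real_inner_smul_left, mul_add]
    _ ≤ c * (ε / c * (‖x' - x‖ + ‖y' - y‖)) := by gcongr; exact hp x' y' hy' hx hy
    _ = ε * (‖x' - x‖ + ‖y' - y‖) := by field_simp

lemma smul_mem_gphLimitingNormal {c : ℝ} (hc : 0 < c) (hp : p ∈ gphLimitingNormal Φ x y) :
    c • p ∈ gphLimitingNormal Φ x y := by
  obtain ⟨xs, ys, ps, hmem, hxs, hys, hps⟩ := hp
  exact ⟨xs, ys, fun k => c • ps k,
    fun k => ⟨(hmem k).1, smul_mem_gphFrechetNormal hc (hmem k).2⟩, hxs, hys, hps.const_smul c⟩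

lemma exists_gphFrechetNormal_near_of_mem_gphLimitingNormal (hp : p ∈ gphLimitingNormal Φ x y)
    {ε : ℝ} (hε : 0 < ε) :
    ∃ x' y' q, y' ∈ Φ x' ∧ q ∈ gphFrechetNormal Φ x' y' ∧
      ‖x' - x‖ < ε ∧ ‖y' - y‖ < ε ∧ ‖q - p‖ < ε := by
  obtain ⟨xs, ys, ps, hmem, hxs, hys, hps⟩ := hp
  obtain ⟨k, hx, hy, hq⟩ := ((hxs.eventually (Metric.ball_mem_nhds x hε)).and
    ((hys.eventually (Metric.ball_mem_nhds y hε)).and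
      (hps.eventually (Metric.ball_mem_nhds p hε)))).exists
  exact ⟨xs k, ys k, ps k, (hmem k).1, (hmem k).2,
    mem_ball_iff_norm.1 hx, mem_ball_iff_norm.1 hy, mem_ball_iff_norm.1 hq⟩

end Normals

lemma tendsto_inv_smul_sub_of_norm_sub_lt {x u : H} {t ε : ℕ → ℝ} {us w : ℕ → H}
    (ht : ∀ k, 0 < t k) (hε : Tendsto ε atTop (𝓝 0)) (hus : Tendsto us atTop (𝓝 u))
    (hw : ∀ k, ‖w k - (x + t k • us k)‖ < t k * ε k) :
    Tendsto (fun k => (t k)⁻¹ • (w k - x)) atTop (𝓝 u) := by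
  have herr : Tendsto (fun k => (t k)⁻¹ • (w k - (x + t k • us k))) atTop (𝓝 0) := by
    refine squeeze_zero_norm (fun k => ?_) hε
    rw [norm_smul, norm_inv, Real.norm_of_nonneg (ht k).le, inv_mul_le_iff₀ (ht k)]
    exact (hw k).le
  have hsplit : ∀ k, (t k)⁻¹ • (w k - x) = us k + (t k)⁻¹ • (w k - (x + t k • us k)) := by
    intro k
    rw [← sub_sub, smul_sub (t k)⁻¹ (w k - x), inv_smul_smul₀ (ht k).ne']
    abel
  simpa only [hsplit, add_zero] using hus.add herr

theorem mem_gphDirLimitingNormal_of_tendsto {Φ : H → Set H} {x y u v : H} {p : H × H}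
    {t : ℕ → ℝ} {us vs : ℕ → H} {ps : ℕ → H × H} (ht : ∀ k, 0 < t k)
    (ht0 : Tendsto t atTop (𝓝 0)) (hus : Tendsto us atTop (𝓝 u))
    (hvs : Tendsto vs atTop (𝓝 v)) (hps : Tendsto ps atTop (𝓝 p))
    (hmem : ∀ k, ps k ∈ gphLimitingNormal Φ (x + t k • us k) (y + t k • vs k)) :
    p ∈ gphDirLimitingNormal Φ x y u v := by
  have hε : Tendsto (fun k : ℕ => 1 / ((k : ℝ) + 1)) atTop (𝓝 0) :=
    tendsto_one_div_add_atTop_nhds_zero_nat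
  -- Fréchet normals at points within `t k / (k + 1)`: the error survives rescaling by `(t k)⁻¹`.
  choose x' y' q hgph hq hx' hy' hq' using fun k =>
    exists_gphFrechetNormal_near_of_mem_gphLimitingNormal (hmem k)
      (mul_pos (ht k) Nat.one_div_pos_of_nat)
  have hx : ∀ k, x + t k • ((t k)⁻¹ • (x' k - x)) = x' k := fun k => by
    rw [smul_inv_smul₀ (ht k).ne', add_sub_cancel]
  have hy : ∀ k, y + t k • ((t k)⁻¹ • (y' k - y)) = y' k := fun k => by
    rw [smul_inv_smul₀ (ht k).ne', add_sub_cancel]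
  have hqp : Tendsto (fun k => q k - ps k) atTop (𝓝 0) :=
    squeeze_zero_norm (fun k => (hq' k).le) (by simpa using ht0.mul hε)
  refine ⟨t, fun k => (t k)⁻¹ • (x' k - x), fun k => (t k)⁻¹ • (y' k - y), q,
    fun k => ⟨ht k, ?_, ?_⟩, ht0, tendsto_inv_smul_sub_of_norm_sub_lt ht hε hus hx',
    tendsto_inv_smul_sub_of_norm_sub_lt ht hε hvs hy', by simpa using hqp.add hps⟩
  · rw [hx, hy]; exact hgph k
  · rw [hx, hy]; exact hq k

namespace SemismoothStar

variable {Φ : H → Set H} {x y : H}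

theorem inner_eq_zero_of_tendsto (hss : SemismoothStar Φ x y) {u : H} {p : H × H}
    {t : ℕ → ℝ} {us : ℕ → H} {ps : ℕ → H × H} (ht : ∀ k, 0 < t k)
    (ht0 : Tendsto t atTop (𝓝 0)) (hus : Tendsto us atTop (𝓝 u)) (hps : Tendsto ps atTop (𝓝 p))
    (hmem : ∀ k, ps k ∈ gphLimitingNormal Φ (x + t k • us k) y) :
    ⟪p.1, u⟫ = 0 := by
  have hdir : p ∈ gphDirLimitingNormal Φ x y u 0 :=
    mem_gphDirLimitingNormal_of_tendsto ht ht0 hus tendsto_const_nhds hps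
      (by simpa only [smul_zero, add_zero] using hmem)
  simpa only [inner_zero_right, add_zero] using hss u 0 p hdir

theorem eventually_mul_abs_inner_lt [ProperSpace H] (hss : SemismoothStar Φ x y) (K : ℝ) :
    ∀ᶠ x' in 𝓝[≠] x, ∀ p ∈ gphLimitingNormal Φ x' y, p ≠ 0 →
      K * |⟪p.1, x' - x⟫| < ‖p‖ * ‖x' - x‖ := by
  by_contra hcon
  have hfreq := (not_eventually.1 hcon).and_eventually self_mem_nhdsWithin
  simp only [not_forall, not_lt] at hfreq
  obtain ⟨xs, hxs, hk⟩ := exists_seq_forall_of_frequently hfreq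
  choose ps hps hps0 hle using fun k => (hk k).1
  have hne : ∀ k, xs k ≠ x := fun k => (hk k).2
  set t := fun k => ‖xs k - x‖
  have ht : ∀ k, 0 < t k := fun k => norm_pos_iff.2 (sub_ne_zero.2 (hne k))
  have ht0 : Tendsto t atTop (𝓝 0) := by
    simpa using ((tendsto_nhdsWithin_iff.1 hxs).1.sub_const x).norm
  set us := fun k => (t k)⁻¹ • (xs k - x)
  set qs := fun k => ‖ps k‖⁻¹ • ps k
  have hxs_eq : ∀ k, x + t k • us k = xs k := fun k => by
    simp only [us, smul_inv_smul₀ (ht k).ne', add_sub_cancel]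
  have hqs : ∀ k, qs k ∈ gphLimitingNormal Φ (x + t k • us k) y := fun k => by
    rw [hxs_eq]; exact smul_mem_gphLimitingNormal (inv_pos.2 (norm_pos_iff.2 (hps0 k))) (hps k)
  have hone : ∀ k, 1 ≤ K * |⟪(qs k).1, us k⟫| := by
    intro k
    have hp := norm_pos_iff.2 (hps0 k)
    have hquot : |⟪(qs k).1, us k⟫| = |⟪(ps k).1, xs k - x⟫| / (‖ps k‖ * t k) := by
      simp only [qs, us, Prod.smul_fst, real_inner_smul_left, real_inner_smul_right, abs_mul,
        abs_inv, abs_norm, abs_of_pos (ht k)]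
      field_simp
    rw [hquot, mul_div_assoc', le_div_iff₀ (mul_pos hp (ht k)), one_mul]
    exact hle k
  have hball : ∀ k, (us k, qs k) ∈ Metric.closedBall (0 : H × (H × H)) 1 := fun k => by
    rw [mem_closedBall_zero_iff, Prod.norm_def]
    exact max_le (norm_smul_inv_norm (sub_ne_zero.2 (hne k))).le
      (norm_smul_inv_norm (hps0 k)).le
  obtain ⟨⟨u, q⟩, -, φ, hφ, hlim⟩ := (isCompact_closedBall _ _).tendsto_subseq hball
  have horth : ⟪q.1, u⟫ = 0 :=
    hss.inner_eq_zero_of_tendsto (fun k => ht (φ k)) (ht0.comp hφ.tendsto_atTop)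
      hlim.fst_nhds hlim.snd_nhds (fun k => hqs (φ k))
  have hlim_one : 1 ≤ K * |⟪q.1, u⟫| :=
    ge_of_tendsto (((hlim.snd_nhds.fst_nhds.inner hlim.fst_nhds).abs).const_mul K)
      (Eventually.of_forall fun k => hone (φ k))
  norm_num [horth] at hlim_one

end SemismoothStar

section BlockMatrix

open Matrix

variable {n : ℕ}

lemma norm_toEuclideanCLM_sq_eq_sum_inner_row (A : Matrix (Fin n) (Fin n) ℝ)
    (d : EuclideanSpace ℝ (Fin n)) :
    ‖toEuclideanCLM (𝕜 := ℝ) A d‖ ^ 2 = ∑ i, ⟪WithLp.toLp 2 (A i), d⟫ ^ 2 := by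
  rw [EuclideanSpace.norm_sq_eq]
  refine Finset.sum_congr rfl fun i _ => ?_
  rw [ofLp_toEuclideanCLM, Real.norm_eq_abs, sq_abs]
  simp [Matrix.mulVec, dotProduct, PiLp.inner_apply, mul_comm]

lemma sum_norm_row_sq_le_frobBlockNorm_sq (A B : Matrix (Fin n) (Fin n) ℝ) :
    ∑ i, ‖(WithLp.toLp 2 (A i), -WithLp.toLp 2 (B i))‖ ^ 2 ≤ frobBlockNorm A B ^ 2 := by
  have hrow (M : Matrix (Fin n) (Fin n) ℝ) (i : Fin n) :
      ‖WithLp.toLp 2 (M i)‖ ^ 2 = ∑ j, M i j ^ 2 := by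
    simp [EuclideanSpace.norm_sq_eq]
  rw [frobBlockNorm, Real.sq_sqrt (by positivity), ← Finset.sum_add_distrib]
  refine Finset.sum_le_sum fun i _ => ?_
  rw [Prod.norm_def, norm_neg, ← hrow A, ← hrow B]
  rcases max_cases ‖WithLp.toLp 2 (A i)‖ ‖WithLp.toLp 2 (B i)‖ with ⟨h, -⟩ | ⟨h, -⟩ <;>
    rw [h] <;> nlinarith [sq_nonneg ‖WithLp.toLp 2 (A i)‖, sq_nonneg ‖WithLp.toLp 2 (B i)‖]

theorem exists_row_inner_ne_zero_of_frobBlockNorm_le {A B : Matrix (Fin n) (Fin n) ℝ}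
    (hA : IsUnit A) {κ : ℝ} (hκ : ‖toEuclideanCLM (𝕜 := ℝ) A⁻¹‖ * frobBlockNorm A B ≤ κ)
    {d : EuclideanSpace ℝ (Fin n)} (hd : d ≠ 0) :
    ∃ i, ⟪WithLp.toLp 2 (A i), d⟫ ≠ 0 ∧
      ‖(WithLp.toLp 2 (A i), -WithLp.toLp 2 (B i))‖ * ‖d‖ ≤ κ * |⟪WithLp.toLp 2 (A i), d⟫| := by
  set s := fun i => ⟪WithLp.toLp 2 (A i), d⟫
  set ν := fun i => ‖(WithLp.toLp 2 (A i), -WithLp.toLp 2 (B i))‖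
  set Ad := toEuclideanCLM (𝕜 := ℝ) A d
  have hinv : toEuclideanCLM (𝕜 := ℝ) A⁻¹ Ad = d := by
    change (toEuclideanCLM (𝕜 := ℝ) A⁻¹ * toEuclideanCLM (𝕜 := ℝ) A) d = d
    rw [← map_mul, nonsing_inv_mul _ ((isUnit_iff_isUnit_det A).1 hA), map_one]
    rfl
  have hd_le : ‖d‖ ≤ ‖toEuclideanCLM (𝕜 := ℝ) A⁻¹‖ * ‖Ad‖ := by
    conv_lhs => rw [← hinv]
    exact ContinuousLinearMap.le_opNorm _ _
  have hF : 0 ≤ frobBlockNorm A B := Real.sqrt_nonneg _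
  have hκ0 : 0 ≤ κ := (mul_nonneg (norm_nonneg _) hF).trans hκ
  have hsum : ∑ i, (ν i * ‖d‖) ^ 2 ≤ ∑ i, (κ * s i) ^ 2 := by
    have hFd : frobBlockNorm A B * ‖d‖ ≤ κ * ‖Ad‖ := calc
      frobBlockNorm A B * ‖d‖ ≤ frobBlockNorm A B * (‖toEuclideanCLM (𝕜 := ℝ) A⁻¹‖ * ‖Ad‖) := by
          gcongr
      _ = ‖toEuclideanCLM (𝕜 := ℝ) A⁻¹‖ * frobBlockNorm A B * ‖Ad‖ := by ring
      _ ≤ κ * ‖Ad‖ := by gcongr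
    calc ∑ i, (ν i * ‖d‖) ^ 2 = (∑ i, ν i ^ 2) * ‖d‖ ^ 2 := by
          simp_rw [mul_pow, Finset.sum_mul]
      _ ≤ frobBlockNorm A B ^ 2 * ‖d‖ ^ 2 := by
          gcongr; exact sum_norm_row_sq_le_frobBlockNorm_sq A B
      _ = (frobBlockNorm A B * ‖d‖) ^ 2 := by ring
      _ ≤ (κ * ‖Ad‖) ^ 2 := by gcongr
      _ = ∑ i, (κ * s i) ^ 2 := by
          rw [mul_pow, norm_toEuclideanCLM_sq_eq_sum_inner_row, Finset.mul_sum]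
          simp_rw [mul_pow]
          rfl
  -- Comparing the sums over rows with `s i ≠ 0` only forces the selected row to see `d`.
  set S := Finset.univ.filter fun i => s i ≠ 0
  have hS : S.Nonempty := by
    by_contra hS
    rw [Finset.not_nonempty_iff_eq_empty, Finset.filter_eq_empty_iff] at hS
    have hAd : ‖Ad‖ = 0 := by
      rw [← sq_eq_zero_iff, norm_toEuclideanCLM_sq_eq_sum_inner_row]
      exact Finset.sum_eq_zero fun i hi => (pow_eq_zero_iff two_ne_zero).2 (not_not.1 (hS hi))
    exact hd (norm_le_zero_iff.1 (by simpa [hAd] using hd_le))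
  obtain ⟨i, hiS, hi⟩ := Finset.exists_le_of_sum_le hS (calc
    ∑ i ∈ S, (ν i * ‖d‖) ^ 2 ≤ ∑ i, (ν i * ‖d‖) ^ 2 :=
        Finset.sum_le_sum_of_subset_of_nonneg (Finset.filter_subset _ _)
          fun _ _ _ => sq_nonneg _
    _ ≤ ∑ i, (κ * s i) ^ 2 := hsum
    _ = ∑ i ∈ S, (κ * s i) ^ 2 :=
        (Finset.sum_filter_of_ne (p := fun i => s i ≠ 0)
          fun _ _ h hs => h (by rw [hs]; ring)).symm)
  refine ⟨i, (Finset.mem_filter.1 hiS).2, ?_⟩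
  have := sq_le_sq.1 hi
  rwa [abs_of_nonneg (by positivity), abs_mul, abs_of_nonneg hκ0] at this

end BlockMatrix

theorem semismooth_star_isolated_solution_general
    {n : ℕ} (F : EuclideanSpace ℝ (Fin n) → Set (EuclideanSpace ℝ (Fin n)))
    (xbar : EuclideanSpace ℝ (Fin n))
    (hss : SemismoothStar F xbar 0)
    (δbar κ : ℝ) (hδbar : 0 < δbar)
    (hAB : ∀ x y, y ∈ F x → Real.sqrt (‖x - xbar‖ ^ 2 + ‖y‖ ^ 2) ≤ δbar →
      ∃ A B : Matrix (Fin n) (Fin n) ℝ,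
        (∀ i, (EuclideanSpace.equiv (Fin n) ℝ).symm (A i) ∈
          coderiv F x y ((EuclideanSpace.equiv (Fin n) ℝ).symm (B i))) ∧
        IsUnit A ∧
        ‖Matrix.toEuclideanCLM (𝕜 := ℝ) A⁻¹‖ * frobBlockNorm A B ≤ κ) :
    ∃ δ > (0 : ℝ), ∀ x, x ≠ xbar → ‖x - xbar‖ < δ →
      (0 : EuclideanSpace ℝ (Fin n)) ∉ F x := by
  have hnear : ∀ᶠ x in 𝓝[≠] xbar, (∀ p ∈ gphLimitingNormal F x 0, p ≠ 0 →
      κ * |⟪p.1, x - xbar⟫| < ‖p‖ * ‖x - xbar‖) ∧ ‖x - xbar‖ ≤ δbar :=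
    (hss.eventually_mul_abs_inner_lt κ).and <| eventually_nhdsWithin_of_eventually_nhds <|
      Metric.eventually_nhds_iff.2 ⟨δbar, hδbar, fun x hx => (dist_eq_norm x xbar ▸ hx).le⟩
  obtain ⟨δ, hδ, hball⟩ := Metric.eventually_nhds_iff.1 (eventually_nhdsWithin_iff.1 hnear)
  refine ⟨δ, hδ, fun x hx hxδ hsol => ?_⟩
  obtain ⟨horth, hclose⟩ := hball (by rwa [dist_eq_norm]) hx
  obtain ⟨A, B, hcoderiv, hA, hκ⟩ := hAB x 0 hsol (by simpa using hclose)
  obtain ⟨i, hne, hle⟩ := exists_row_inner_ne_zero_of_frobBlockNorm_le hA hκ (sub_ne_zero.2 hx)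
  refine (horth _ (hcoderiv i) fun h => hne ?_).not_ge hle
  simpa using congrArg (fun p => ⟪p.1, x - xbar⟫) h

/-- if `F` is semismooth* at `(x̄, 0)` and near `(x̄, 0)` one always
finds coderivative-based matrix pairs `(A,B)` with `A` nonsingular and
`‖A⁻¹‖‖(A ⋮ B)‖_F ≤ κ`, then `x̄` is an isolated solution of `0 ∈ F(x)`. -/
theorem semismooth_star_isolated_solution
    {n : ℕ} (F : EuclideanSpace ℝ (Fin n) → Set (EuclideanSpace ℝ (Fin n)))
    (xbar : EuclideanSpace ℝ (Fin n)) (hsol : (0 : EuclideanSpace ℝ (Fin n)) ∈ F xbar)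
    (hss : SemismoothStar F xbar 0)
    (δbar κ : ℝ) (hδbar : 0 < δbar) (hκ : 0 < κ)
    (hAB : ∀ x y, y ∈ F x → Real.sqrt (‖x - xbar‖ ^ 2 + ‖y‖ ^ 2) ≤ δbar →
      ∃ A B : Matrix (Fin n) (Fin n) ℝ,
        (∀ i, (EuclideanSpace.equiv (Fin n) ℝ).symm (A i) ∈
          coderiv F x y ((EuclideanSpace.equiv (Fin n) ℝ).symm (B i))) ∧
        IsUnit A ∧
        ‖Matrix.toEuclideanCLM (𝕜 := ℝ) A⁻¹‖ * frobBlockNorm A B ≤ κ) :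
    ∃ δ > (0 : ℝ), ∀ x, x ≠ xbar → ‖x - xbar‖ < δ →
      (0 : EuclideanSpace ℝ (Fin n)) ∉ F x :=
  semismooth_star_isolated_solution_general F xbar hss δbar κ hδbar hAB
end

section
/- Suppose in addition to the setting of the Douglas–Rachford residual inequality that f is Lipschitz with constant l on the relevant set and strongly monotone with modulus μ_f > 0. Then from ‖u^{(k+1)}‖² ≤ ‖u^{(k+1)}‖‖u^{(k)}‖ − (μ_f/γ)‖x^{(k+1)} − x^{(k)}‖² and (γ/(γ+l))‖u^{(k)}‖ ≤ ‖x^{(k+1)} − x^{(k)}‖ ≤ ‖u^{(k)}‖ it follows that ‖u^{(k+1)}‖ < τ‖u^{(k)}‖ with τ := 1 − μ_f γ/(γ+l)² < 1. -/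
/-! Write `a = ‖u⁽ᵏ⁺¹⁾‖`, `b = ‖u⁽ᵏ⁾‖` and `c = μ_f γ/(γ+l)²`. The lower bound on `‖x⁽ᵏ⁺¹⁾ − x⁽ᵏ⁾‖`
turns the residual inequality into `c b² ≤ a (b − a)`. As `c b² > 0`, this forces `0 < a < b`,
hence `c b² < b (b − a)`, i.e. `a < (1 − c) b`. -/

section OrderedField

variable {K : Type*} [Field K] [LinearOrder K] [IsStrictOrderedRing K]

theorem sq_le_mul_sub_sq_of_mul_le {a b d k r : K} (hk : 0 ≤ k) (hrb : 0 ≤ r * b)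
    (h : a ^ 2 ≤ a * b - k * d ^ 2) (hd : r * b ≤ d) :
    a ^ 2 ≤ a * b - k * r ^ 2 * b ^ 2 := by
  have hsq : (r * b) ^ 2 ≤ d ^ 2 := pow_le_pow_left₀ hrb hd 2
  nlinarith [mul_le_mul_of_nonneg_left hsq hk]

theorem lt_one_sub_mul_of_sq_le_mul_sub {a b c : K} (ha : 0 ≤ a) (hb : 0 < b) (hc : 0 < c)
    (h : a ^ 2 ≤ a * b - c * b ^ 2) :
    a < (1 - c) * b := by
  have hcb : 0 < c * b ^ 2 := by positivity
  have hab : c * b ^ 2 ≤ a * (b - a) := by linarith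
  have hlt : a < b := by nlinarith
  have hstrict : c * b ^ 2 < b * (b - a) :=
    hab.trans_lt (mul_lt_mul_of_pos_right hlt (by nlinarith))
  nlinarith

end OrderedField

theorem DR_residual_linear_decrease_general
    {n : ℕ} (x x' u u' : EuclideanSpace ℝ (Fin n))
    (μf γ l : ℝ) (hμf : 0 < μf) (hγ : 0 < γ) (hl : 0 ≤ l) (hu : u ≠ 0)
    (h1 : ‖u'‖ ^ 2 ≤ ‖u'‖ * ‖u‖ - (μf / γ) * ‖x' - x‖ ^ 2)
    (h2 : (γ / (γ + l)) * ‖u‖ ≤ ‖x' - x‖) :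
    ‖u'‖ < (1 - μf * γ / (γ + l) ^ 2) * ‖u‖ ∧ 1 - μf * γ / (γ + l) ^ 2 < 1 := by
  have hγl : 0 < γ + l := by linarith
  have hc : 0 < μf * γ / (γ + l) ^ 2 := by positivity
  have hcoeff : μf / γ * (γ / (γ + l)) ^ 2 = μf * γ / (γ + l) ^ 2 := by
    field_simp
  have hsq := sq_le_mul_sub_sq_of_mul_le (by positivity) (by positivity) h1 h2
  rw [hcoeff] at hsq
  exact ⟨lt_one_sub_mul_of_sq_le_mul_sub (norm_nonneg _) (norm_pos_iff.mpr hu) hc hsq,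
    sub_lt_self 1 hc⟩

/-- Q-linear decrease of the Douglas–Rachford residual: from
`‖u'‖² ≤ ‖u'‖‖u‖ − (μ_f/γ)‖x'−x‖²` and `(γ/(γ+l))‖u‖ ≤ ‖x'−x‖ ≤ ‖u‖` it follows
that `‖u'‖ < τ‖u‖` with `τ = 1 − μ_f γ/(γ+l)² < 1`. -/
theorem DR_residual_linear_decrease
    {n : ℕ} (x x' u u' : EuclideanSpace ℝ (Fin n))
    (μf γ l : ℝ) (hμf : 0 < μf) (hγ : 0 < γ) (hl : 0 ≤ l) (hu : u ≠ 0)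
    (h1 : ‖u'‖ ^ 2 ≤ ‖u'‖ * ‖u‖ - (μf / γ) * ‖x' - x‖ ^ 2)
    (h2 : (γ / (γ + l)) * ‖u‖ ≤ ‖x' - x‖)
    (h3 : ‖x' - x‖ ≤ ‖u‖) :
    ‖u'‖ < (1 - μf * γ / (γ + l) ^ 2) * ‖u‖ ∧ 1 - μf * γ / (γ + l) ^ 2 < 1 :=
  DR_residual_linear_decrease_general x x' u u' μf γ l hμf hγ hl hu h1 h2
end

section
/- Let ∂q_i ⊂ ℝ × ℝ be the maximal monotone operator whose graph is the polygonal line through the points (ξ₁,−∞),(ξ₁,η₁),(ξ₂,η₂),…,(ξ_{2m},η_{2m}),(ξ_{2m},+∞), where Δξ_j = ξ_{j+1}−ξ_j is > 0 for odd j and = 0 for even j, Δη_j = η_{j+1}−η_j is ≥ 0 for odd j and > 0 for even j. For a graph point (x_i, x_i*) define G_{ii} = 1 if x_i ∈ A_i := {ξ₁} ∪ {ξ_{2m}} ∪ {ξ_j : Δξ_j = 0}, and G_{ii} = Δη_j/(Δξ_j + Δη_j) if x_i ∈ [ξ_j, ξ_{j+1}]∖A_i with j odd. Then G_{ii} ∈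 [0,1] and the pair ((1−G_{ii})v, G_{ii}v) lies in the graph of the limiting coderivative D*(∂q_i)(x_i, x_i*) for every v ∈ ℝ. -/
open RealInnerProductSpace Set Filter Topology

variable {H : Type*} [NormedAddCommGroup H] [InnerProductSpace ℝ H]

/-!
The polygon is a monotone graph. If `x` is a vertical abscissa, `(x, x*)` is a limit of interior
points of a vertical piece (ray or segment) of the graph; near such a point monotonicity forces
the graph to be the vertical line itself, so `(v, 0)` is a Fréchet normal there, and a limiting
normal at `(x, x*)`. Otherwise `x` lies strictly inside the abscissa range of a sloped segment,
near `(x, x*)` the graph is that segment, and `(G v, -(1 - G) v)` is orthogonal to its direction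
`(Δξ, Δη)` exactly because `G = Δη / (Δξ + Δη)`.
-/

theorem mem_gphFrechetNormal_of_locally_inner_nonpos {Φ : H → Set H} {x y : H} {p : H × H}
    {δ : ℝ} (hδ : 0 < δ)
    (h : ∀ x' y', y' ∈ Φ x' → ‖x' - x‖ < δ → ‖y' - y‖ < δ → ⟪p.1, x' - x⟫ + ⟪p.2, y' - y⟫ ≤ 0) :
    p ∈ gphFrechetNormal Φ x y :=
  fun ε hε => ⟨δ, hδ, fun x' y' hy hx' hy' => (h x' y' hy hx' hy').trans (by positivity)⟩

theorem mem_gphLimitingNormal_of_mem_closure {Φ : H → Set H} {x y : H} {p : H × H} {S : Set H}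
    (hS : ∀ c ∈ S, c ∈ Φ x ∧ p ∈ gphFrechetNormal Φ x c) (hy : y ∈ closure S) :
    p ∈ gphLimitingNormal Φ x y := by
  obtain ⟨ys, hys, hlim⟩ := mem_closure_iff_seq_limit.1 hy
  exact ⟨fun _ => x, ys, fun _ => p, fun k => hS _ (hys k), tendsto_const_nhds, hlim,
    tendsto_const_nhds⟩

def MonotoneRel {α β : Type*} [Preorder α] [Preorder β] (Φ : α → Set β) : Prop :=
  ∀ ⦃a a' : α⦄ ⦃b b' : β⦄, b ∈ Φ a → b' ∈ Φ a' → a < a' → b ≤ b'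

def OnVerticalSegment (Φ : ℝ → Set ℝ) (a b : ℝ) : Prop :=
  ∃ lo hi, lo < hi ∧ b ∈ Icc lo hi ∧ Icc lo hi ⊆ Φ a

theorem onVerticalSegment_of_Iic_subset {Φ : ℝ → Set ℝ} {a b c : ℝ} (h : Iic c ⊆ Φ a)
    (hb : b ≤ c) : OnVerticalSegment Φ a b :=
  ⟨b - 1, c, by linarith, ⟨by linarith, hb⟩, Icc_subset_Iic_self.trans h⟩

theorem onVerticalSegment_of_Ici_subset {Φ : ℝ → Set ℝ} {a b c : ℝ} (h : Ici c ⊆ Φ a)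
    (hb : c ≤ b) : OnVerticalSegment Φ a b :=
  ⟨c, b + 1, by linarith, ⟨hb, by linarith⟩, Icc_subset_Ici_self.trans h⟩

namespace MonotoneRel

theorem eq_of_mem_of_lt_of_lt {α β : Type*} [LinearOrder α] [Preorder β] {Φ : α → Set β}
    (hΦ : MonotoneRel Φ) {a a' : α} {lo hi b' : β} (hlo : lo ∈ Φ a) (hhi : hi ∈ Φ a)
    (hb' : b' ∈ Φ a') (hlob' : lo < b') (hb'hi : b' < hi) : a' = a := by
  rcases lt_trichotomy a' a with h | h | h
  · exact absurd (hΦ hb' hlo h) hlob'.not_ge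
  · exact h
  · exact absurd (hΦ hhi hb' h) hb'hi.not_ge

theorem mem_gphFrechetNormal {Φ : ℝ → Set ℝ} (hΦ : MonotoneRel Φ) {a b r : ℝ} (hr : 0 < r)
    (hlo : b - r ∈ Φ a) (hhi : b + r ∈ Φ a) (v : ℝ) :
    (v, 0) ∈ gphFrechetNormal Φ a b := by
  refine mem_gphFrechetNormal_of_locally_inner_nonpos hr fun x' y' hy' _ hyb => ?_
  rw [Real.norm_eq_abs, abs_sub_lt_iff] at hyb
  obtain rfl := hΦ.eq_of_mem_of_lt_of_lt hlo hhi hy' (by linarith) (by linarith)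
  simp

theorem mem_gphLimitingNormal {Φ : ℝ → Set ℝ} (hΦ : MonotoneRel Φ) {a b : ℝ}
    (hb : OnVerticalSegment Φ a b) (v : ℝ) : (v, 0) ∈ gphLimitingNormal Φ a b := by
  obtain ⟨lo, hi, hlohi, hb, hsub⟩ := hb
  refine mem_gphLimitingNormal_of_mem_closure (S := Ioo lo hi) (fun c hc => ⟨hsub
    (Ioo_subset_Icc_self hc), ?_⟩) (by rwa [closure_Ioo hlohi.ne])
  have hr : 0 < min (c - lo) (hi - c) := lt_min (by linarith [hc.1]) (by linarith [hc.2])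
  refine hΦ.mem_gphFrechetNormal hr (hsub ⟨?_, ?_⟩) (hsub ⟨?_, ?_⟩) v <;>
    linarith [min_le_left (c - lo) (hi - c), min_le_right (c - lo) (hi - c), hc.1, hc.2]

end MonotoneRel

theorem exists_add_mul_sub_eq_iff_mem_Icc {p q b : ℝ} (h : p ≤ q) :
    (∃ t ∈ Icc (0 : ℝ) 1, p + t * (q - p) = b) ↔ b ∈ Icc p q := by
  rw [← segment_eq_Icc h, segment_eq_image']
  simp only [mem_image, smul_eq_mul]

theorem monotoneOn_Iic_of_le_succ {α : Type*} [Preorder α] {f : ℕ → α} {n : ℕ}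
    (h : ∀ j < n, f j ≤ f (j + 1)) : MonotoneOn f (Iic n) := by
  intro i hi k hk hik
  induction k, hik using Nat.le_induction with
  | base => exact le_rfl
  | succ k _ ih => exact (ih (Nat.le_of_succ_le hk)).trans (h k hk)

/-- Index `j` here is `j + 1` in the paper, so the sloped segments (`Δξ > 0`) have even index
and the vertical ones (`Δξ = 0`) odd index. -/
def PolygonAbscissae (m : ℕ) (ξ : ℕ → ℝ) : Prop :=
  ∀ j, j < 2 * m - 1 → (Even j → ξ j < ξ (j + 1)) ∧ (¬Even j → ξ (j + 1) = ξ j)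

def PolygonOrdinates (m : ℕ) (η : ℕ → ℝ) : Prop :=
  ∀ j, j < 2 * m - 1 → (Even j → η j ≤ η (j + 1)) ∧ (¬Even j → η j < η (j + 1))

/-- The set `A_i` of the paper. -/
def verticalAbscissae (m : ℕ) (ξ : ℕ → ℝ) : Set ℝ :=
  {x | x = ξ 0 ∨ x = ξ (2 * m - 1) ∨ ∃ j < 2 * m - 1, ξ (j + 1) = ξ j ∧ x = ξ j}

def OnSegment (ξ η : ℕ → ℝ) (j : ℕ) (a b : ℝ) : Prop :=
  ∃ t ∈ Icc (0 : ℝ) 1, a = ξ j + t * (ξ (j + 1) - ξ j) ∧ b = η j + t * (η (j + 1) - η j)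

def polygonGraph (m : ℕ) (ξ η : ℕ → ℝ) : ℝ → Set ℝ := fun a =>
  {b | (a = ξ 0 ∧ b ≤ η 0) ∨ (a = ξ (2 * m - 1) ∧ η (2 * m - 1) ≤ b) ∨
    ∃ j < 2 * m - 1, OnSegment ξ η j a b}

section Polygon

variable {m : ℕ} {ξ η : ℕ → ℝ}

namespace PolygonAbscissae

theorem le_succ (hξ : PolygonAbscissae m ξ) {j : ℕ} (hj : j < 2 * m - 1) : ξ j ≤ ξ (j + 1) := by
  by_cases h : Even j
  · exact ((hξ j hj).1 h).le
  · exact ((hξ j hj).2 h).ge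

theorem mono (hξ : PolygonAbscissae m ξ) {i k : ℕ} (hik : i ≤ k) (hk : k ≤ 2 * m - 1) :
    ξ i ≤ ξ k :=
  monotoneOn_Iic_of_le_succ (fun _ => hξ.le_succ) (mem_Iic.2 (hik.trans hk)) (mem_Iic.2 hk) hik

end PolygonAbscissae

namespace PolygonOrdinates

theorem le_succ (hη : PolygonOrdinates m η) {j : ℕ} (hj : j < 2 * m - 1) : η j ≤ η (j + 1) := by
  by_cases h : Even j
  · exact (hη j hj).1 h
  · exact ((hη j hj).2 h).le

theorem mono (hη : PolygonOrdinates m η) {i k : ℕ} (hik : i ≤ k) (hk : k ≤ 2 * m - 1) :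
    η i ≤ η k :=
  monotoneOn_Iic_of_le_succ (fun _ => hη.le_succ) (mem_Iic.2 (hik.trans hk)) (mem_Iic.2 hk) hik

end PolygonOrdinates

namespace OnSegment

theorem fst_mem_Icc (hξ : PolygonAbscissae m ξ) {j : ℕ} (hj : j < 2 * m - 1) {a b : ℝ}
    (h : OnSegment ξ η j a b) : a ∈ Icc (ξ j) (ξ (j + 1)) := by
  obtain ⟨t, ht, rfl, -⟩ := h
  exact (exists_add_mul_sub_eq_iff_mem_Icc (hξ.le_succ hj)).1 ⟨t, ht, rfl⟩

theorem snd_mem_Icc (hη : PolygonOrdinates m η) {j : ℕ} (hj : j < 2 * m - 1) {a b : ℝ}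
    (h : OnSegment ξ η j a b) : b ∈ Icc (η j) (η (j + 1)) := by
  obtain ⟨t, ht, -, rfl⟩ := h
  exact (exists_add_mul_sub_eq_iff_mem_Icc (hη.le_succ hj)).1 ⟨t, ht, rfl⟩

end OnSegment

theorem Iic_subset_polygonGraph : Iic (η 0) ⊆ polygonGraph m ξ η (ξ 0) :=
  fun _ hb => Or.inl ⟨rfl, hb⟩

theorem Ici_subset_polygonGraph : Ici (η (2 * m - 1)) ⊆ polygonGraph m ξ η (ξ (2 * m - 1)) :=
  fun _ hb => Or.inr (Or.inl ⟨rfl, hb⟩)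

theorem Icc_subset_polygonGraph (hη : PolygonOrdinates m η) {j : ℕ} (hj : j < 2 * m - 1)
    (hv : ξ (j + 1) = ξ j) : Icc (η j) (η (j + 1)) ⊆ polygonGraph m ξ η (ξ j) := by
  intro b hb
  obtain ⟨t, ht, rfl⟩ := (exists_add_mul_sub_eq_iff_mem_Icc (hη.le_succ hj)).2 hb
  exact Or.inr (Or.inr ⟨j, hj, t, ht, by rw [hv]; ring, rfl⟩)

theorem polygonGraph_monotoneRel (hξ : PolygonAbscissae m ξ) (hη : PolygonOrdinates m η) :
    MonotoneRel (polygonGraph m ξ η) := by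
  intro a a' b b' hb hb' haa'
  rcases hb with ⟨rfl, hb⟩ | ⟨rfl, hb⟩ | ⟨j, hj, hs⟩ <;>
    rcases hb' with ⟨rfl, hb'⟩ | ⟨rfl, hb'⟩ | ⟨j', hj', hs'⟩
  · exact absurd haa' (lt_irrefl _)
  · linarith [hη.mono (Nat.zero_le _) le_rfl]
  · linarith [hη.mono (Nat.zero_le _) hj'.le, (hs'.snd_mem_Icc hη hj').1]
  · linarith [hξ.mono (Nat.zero_le _) le_rfl]
  · exact absurd haa' (lt_irrefl _)
  · linarith [hξ.mono hj' le_rfl, (hs'.fst_mem_Icc hξ hj').2]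
  · linarith [hξ.mono (Nat.zero_le _) hj.le, (hs.fst_mem_Icc hξ hj).1]
  · linarith [hη.mono hj le_rfl, (hs.snd_mem_Icc hη hj).2]
  · rcases lt_trichotomy j j' with hjj' | rfl | hjj'
    · linarith [hη.mono hjj' hj'.le, (hs.snd_mem_Icc hη hj).2, (hs'.snd_mem_Icc hη hj').1]
    · obtain ⟨t, -, rfl, rfl⟩ := hs
      obtain ⟨t', -, rfl, rfl⟩ := hs'
      have hξj := hξ.le_succ hj
      have hηj := hη.le_succ hj
      have htt' : t < t' := by by_contra! h; nlinarith
      nlinarith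
    · linarith [hξ.mono hjj' hj.le, (hs.fst_mem_Icc hξ hj).1, (hs'.fst_mem_Icc hξ hj').2]

theorem onVerticalSegment_vertex (hξ : PolygonAbscissae m ξ) (hη : PolygonOrdinates m η)
    {i : ℕ} (hi : i ≤ 2 * m - 1) : OnVerticalSegment (polygonGraph m ξ η) (ξ i) (η i) := by
  rcases i.eq_zero_or_pos with rfl | hi0
  · exact onVerticalSegment_of_Iic_subset Iic_subset_polygonGraph le_rfl
  rcases hi.eq_or_lt with rfl | hi
  · exact onVerticalSegment_of_Ici_subset Ici_subset_polygonGraph le_rfl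
  by_cases he : Even i
  · obtain ⟨k, rfl⟩ := Nat.exists_eq_add_one_of_ne_zero hi0.ne'
    have hk : ¬Even k := Nat.even_add_one.1 he
    have hηk := (hη k (by omega)).2 hk
    rw [(hξ k (by omega)).2 hk]
    exact ⟨η k, η (k + 1), hηk, ⟨hηk.le, le_rfl⟩,
      Icc_subset_polygonGraph hη (by omega) ((hξ k (by omega)).2 hk)⟩
  · have hηi := (hη i hi).2 he
    exact ⟨η i, η (i + 1), hηi, ⟨le_rfl, hηi.le⟩, Icc_subset_polygonGraph hη hi ((hξ i hi).2 he)⟩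

theorem xi_mem_verticalAbscissae (hξ : PolygonAbscissae m ξ) {i : ℕ} (hi : i ≤ 2 * m - 1) :
    ξ i ∈ verticalAbscissae m ξ := by
  rcases i.eq_zero_or_pos with rfl | hi0
  · exact Or.inl rfl
  rcases hi.eq_or_lt with rfl | hi
  · exact Or.inr (Or.inl rfl)
  by_cases he : Even i
  · obtain ⟨k, rfl⟩ := Nat.exists_eq_add_one_of_ne_zero hi0.ne'
    have hv := (hξ k (by omega)).2 (Nat.even_add_one.1 he)
    exact Or.inr (Or.inr ⟨k, by omega, hv, hv⟩)
  · exact Or.inr (Or.inr ⟨i, hi, (hξ i hi).2 he, rfl⟩)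

theorem not_mem_verticalAbscissae_of_mem_Ioo (hξ : PolygonAbscissae m ξ) {j : ℕ}
    (hj : j < 2 * m - 1) {a : ℝ} (ha : a ∈ Ioo (ξ j) (ξ (j + 1))) :
    a ∉ verticalAbscissae m ξ := by
  rintro (rfl | rfl | ⟨k, hk, hv, rfl⟩)
  · linarith [hξ.mono (Nat.zero_le j) hj.le, ha.1]
  · linarith [hξ.mono hj le_rfl, ha.2]
  · rcases le_or_gt k j with h | h
    · linarith [hξ.mono h hj.le, ha.1]
    · linarith [hξ.mono h hk.le, ha.2]

theorem onVerticalSegment_of_mem_verticalAbscissae (hξ : PolygonAbscissae m ξ)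
    (hη : PolygonOrdinates m η) {a b : ℝ} (hb : b ∈ polygonGraph m ξ η a)
    (ha : a ∈ verticalAbscissae m ξ) : OnVerticalSegment (polygonGraph m ξ η) a b := by
  rcases hb with ⟨rfl, hb⟩ | ⟨rfl, hb⟩ | ⟨j, hj, t, ht, rfl, rfl⟩
  · exact onVerticalSegment_of_Iic_subset Iic_subset_polygonGraph hb
  · exact onVerticalSegment_of_Ici_subset Ici_subset_polygonGraph hb
  by_cases he : Even j
  · have hΔ := (hξ j hj).1 he
    -- on a sloped segment only the two endpoints have vertical abscissae
    have ht01 : t = 0 ∨ t = 1 := by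
      by_contra! h
      refine not_mem_verticalAbscissae_of_mem_Ioo hξ hj ⟨?_, ?_⟩ ha
      · nlinarith [lt_of_le_of_ne ht.1 h.1.symm]
      · nlinarith [lt_of_le_of_ne ht.2 h.2]
    rcases ht01 with rfl | rfl
    · simpa using onVerticalSegment_vertex hξ hη hj.le
    · simpa using onVerticalSegment_vertex hξ hη hj
  · have hv := (hξ j hj).2 he
    have hηj := (hη j hj).2 he
    rw [hv, sub_self, mul_zero, add_zero]
    exact ⟨η j, η (j + 1), hηj, (exists_add_mul_sub_eq_iff_mem_Icc hηj.le).1 ⟨t, ht, rfl⟩,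
      Icc_subset_polygonGraph hη hj hv⟩

theorem onSegment_of_mem_polygonGraph_of_mem_Ioo (hξ : PolygonAbscissae m ξ) {j : ℕ}
    (hj : j < 2 * m - 1) {a b : ℝ} (ha : a ∈ Ioo (ξ j) (ξ (j + 1)))
    (hb : b ∈ polygonGraph m ξ η a) : OnSegment ξ η j a b := by
  rcases hb with ⟨rfl, -⟩ | ⟨rfl, -⟩ | ⟨k, hk, hs⟩
  · exact absurd (Or.inl rfl) (not_mem_verticalAbscissae_of_mem_Ioo hξ hj ha)
  · exact absurd (Or.inr (Or.inl rfl)) (not_mem_verticalAbscissae_of_mem_Ioo hξ hj ha)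
  rcases lt_trichotomy k j with h | rfl | h
  · linarith [hξ.mono h hj.le, (hs.fst_mem_Icc hξ hk).2, ha.1]
  · exact hs
  · linarith [hξ.mono h hk.le, (hs.fst_mem_Icc hξ hk).1, ha.2]

theorem exists_onSegment_of_not_mem_verticalAbscissae (hξ : PolygonAbscissae m ξ) {a b : ℝ}
    (hb : b ∈ polygonGraph m ξ η a) (ha : a ∉ verticalAbscissae m ξ) :
    ∃ j < 2 * m - 1, Even j ∧ a ∈ Ioo (ξ j) (ξ (j + 1)) ∧ OnSegment ξ η j a b := by
  rcases hb with ⟨rfl, -⟩ | ⟨rfl, -⟩ | ⟨j, hj, hs⟩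
  · exact absurd (Or.inl rfl) ha
  · exact absurd (Or.inr (Or.inl rfl)) ha
  have he : Even j := by
    by_contra he
    have hv := (hξ j hj).2 he
    obtain ⟨t, -, rfl, -⟩ := hs
    exact ha (Or.inr (Or.inr ⟨j, hj, hv, by rw [hv]; ring⟩))
  have hI := hs.fst_mem_Icc hξ hj
  refine ⟨j, hj, he, ⟨hI.1.lt_of_ne ?_, hI.2.lt_of_ne ?_⟩, hs⟩
  · rintro rfl
    exact ha (xi_mem_verticalAbscissae hξ hj.le)
  · rintro rfl
    exact ha (xi_mem_verticalAbscissae hξ hj)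

theorem mem_gphLimitingNormal_polygonGraph_of_mem_Ioo (hξ : PolygonAbscissae m ξ) {j : ℕ}
    (hj : j < 2 * m - 1) {a b : ℝ} (ha : a ∈ Ioo (ξ j) (ξ (j + 1))) (hs : OnSegment ξ η j a b)
    {p : ℝ × ℝ} (hp : p.1 * (ξ (j + 1) - ξ j) + p.2 * (η (j + 1) - η j) = 0) :
    p ∈ gphLimitingNormal (polygonGraph m ξ η) a b := by
  refine mem_gphLimitingNormal_of_mem_closure (S := {b}) (fun c hc => ?_) (subset_closure rfl)
  obtain rfl : c = b := hc
  have hδ : 0 < min (a - ξ j) (ξ (j + 1) - a) := lt_min (by linarith [ha.1]) (by linarith [ha.2])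
  refine ⟨Or.inr (Or.inr ⟨j, hj, hs⟩),
    mem_gphFrechetNormal_of_locally_inner_nonpos hδ fun x' y' hy hx' _ => ?_⟩
  rw [Real.norm_eq_abs, abs_sub_lt_iff] at hx'
  have hx'I : x' ∈ Ioo (ξ j) (ξ (j + 1)) := by
    constructor <;> linarith [min_le_left (a - ξ j) (ξ (j + 1) - a),
      min_le_right (a - ξ j) (ξ (j + 1) - a)]
  obtain ⟨t', -, rfl, rfl⟩ := onSegment_of_mem_polygonGraph_of_mem_Ioo hξ hj hx'I hy
  obtain ⟨t, -, rfl, rfl⟩ := hs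
  simp only [Real.inner_apply]
  linear_combination (t' - t) * hp

end Polygon

theorem polygonal_coderiv_selection_general
    (m : ℕ) (ξ η : ℕ → ℝ)
    (hΔξ : ∀ j, j < 2 * m - 1 → (Even j → ξ j < ξ (j + 1)) ∧ (¬Even j → ξ (j + 1) = ξ j))
    (hΔη : ∀ j, j < 2 * m - 1 → (Even j → η j ≤ η (j + 1)) ∧ (¬Even j → η j < η (j + 1)))
    (x xstar : ℝ)
    (hx : xstar ∈ (fun a => {b : ℝ | (a = ξ 0 ∧ b ≤ η 0) ∨ (a = ξ (2 * m - 1) ∧ η (2 * m - 1) ≤ b) ∨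
        ∃ j < 2 * m - 1, ∃ t ∈ Icc (0 : ℝ) 1,
          a = ξ j + t * (ξ (j + 1) - ξ j) ∧ b = η j + t * (η (j + 1) - η j)}) x)
    (G : ℝ)
    (hG1 : (x = ξ 0 ∨ x = ξ (2 * m - 1) ∨ ∃ j < 2 * m - 1, ξ (j + 1) = ξ j ∧ x = ξ j) → G = 1)
    (hG2 : ∀ j, j < 2 * m - 1 → Even j → x ∈ Icc (ξ j) (ξ (j + 1)) →
      ¬(x = ξ 0 ∨ x = ξ (2 * m - 1) ∨ ∃ j' < 2 * m - 1, ξ (j' + 1) = ξ j' ∧ x = ξ j') →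
      G = (η (j + 1) - η j) / ((ξ (j + 1) - ξ j) + (η (j + 1) - η j))) :
    G ∈ Icc (0 : ℝ) 1 ∧
      ∀ v : ℝ, G * v ∈ coderiv
        (fun a => {b : ℝ | (a = ξ 0 ∧ b ≤ η 0) ∨ (a = ξ (2 * m - 1) ∧ η (2 * m - 1) ≤ b) ∨
          ∃ j < 2 * m - 1, ∃ t ∈ Icc (0 : ℝ) 1,
            a = ξ j + t * (ξ (j + 1) - ξ j) ∧ b = η j + t * (η (j + 1) - η j)})
        x xstar ((1 - G) * v) := by
  have hξ : PolygonAbscissae m ξ := hΔξ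
  have hη : PolygonOrdinates m η := hΔη
  have hx : xstar ∈ polygonGraph m ξ η x := hx
  change G ∈ Icc (0 : ℝ) 1 ∧
    ∀ v : ℝ, (G * v, -((1 - G) * v)) ∈ gphLimitingNormal (polygonGraph m ξ η) x xstar
  by_cases hA : x ∈ verticalAbscissae m ξ
  · obtain rfl := hG1 hA
    refine ⟨⟨zero_le_one, le_rfl⟩, fun v => ?_⟩
    simpa using (polygonGraph_monotoneRel hξ hη).mem_gphLimitingNormal
      (onVerticalSegment_of_mem_verticalAbscissae hξ hη hx hA) v
  · obtain ⟨j, hj, he, hxj, hs⟩ := exists_onSegment_of_not_mem_verticalAbscissae hξ hx hA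
    have hΔξj : 0 < ξ (j + 1) - ξ j := sub_pos.2 ((hξ j hj).1 he)
    have hΔηj : 0 ≤ η (j + 1) - η j := sub_nonneg.2 ((hη j hj).1 he)
    obtain rfl := hG2 j hj he (Ioo_subset_Icc_self hxj) hA
    refine ⟨⟨by positivity, div_le_one_of_le₀ (by linarith) (by positivity)⟩, fun v => ?_⟩
    refine mem_gphLimitingNormal_polygonGraph_of_mem_Ioo hξ hj hxj hs ?_
    field_simp
    ring

/-- coderivative selection for a one-dimensional polygonal maximal
monotone operator (0-indexed: index `j` here corresponds to `j+1` in the paper,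
so "odd" paper indices are even here). -/
theorem polygonal_coderiv_selection
    (m : ℕ) (hm : 1 ≤ m) (ξ η : ℕ → ℝ)
    (hΔξ : ∀ j, j < 2 * m - 1 → (Even j → ξ j < ξ (j + 1)) ∧ (¬Even j → ξ (j + 1) = ξ j))
    (hΔη : ∀ j, j < 2 * m - 1 → (Even j → η j ≤ η (j + 1)) ∧ (¬Even j → η j < η (j + 1)))
    (x xstar : ℝ)
    (hx : xstar ∈ (fun a => {b : ℝ | (a = ξ 0 ∧ b ≤ η 0) ∨ (a = ξ (2 * m - 1) ∧ η (2 * m - 1) ≤ b) ∨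
        ∃ j < 2 * m - 1, ∃ t ∈ Icc (0 : ℝ) 1,
          a = ξ j + t * (ξ (j + 1) - ξ j) ∧ b = η j + t * (η (j + 1) - η j)}) x)
    (G : ℝ)
    (hG1 : (x = ξ 0 ∨ x = ξ (2 * m - 1) ∨ ∃ j < 2 * m - 1, ξ (j + 1) = ξ j ∧ x = ξ j) → G = 1)
    (hG2 : ∀ j, j < 2 * m - 1 → Even j → x ∈ Icc (ξ j) (ξ (j + 1)) →
      ¬(x = ξ 0 ∨ x = ξ (2 * m - 1) ∨ ∃ j' < 2 * m - 1, ξ (j' + 1) = ξ j' ∧ x = ξ j') →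
      G = (η (j + 1) - η j) / ((ξ (j + 1) - ξ j) + (η (j + 1) - η j))) :
    G ∈ Icc (0 : ℝ) 1 ∧
      ∀ v : ℝ, G * v ∈ coderiv
        (fun a => {b : ℝ | (a = ξ 0 ∧ b ≤ η 0) ∨ (a = ξ (2 * m - 1) ∧ η (2 * m - 1) ≤ b) ∨
          ∃ j < 2 * m - 1, ∃ t ∈ Icc (0 : ℝ) 1,
            a = ξ j + t * (ξ (j + 1) - ξ j) ∧ b = η j + t * (η (j + 1) - η j)})
        x xstar ((1 - G) * v) :=
  polygonal_coderiv_selection_general m ξ η hΔξ hΔη x xstar hx G hG1 hG2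
end
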